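/- arXiv:1905.09982 — 12 statements merged into one kernel-verified Lean document; each statement's English description precedes it below -/
import Mathlib

section
/- A randomized algorithm M : X → PMF(Y) is (ε,δ)-differentially private if and only if for every pair of adjacent inputs x₀ and x₁ and every rejection region S ⊆ Y, both PFA(x₀,x₁,M,S) + e^ε·PMD(x₀,x₁,M,S) ≥ 1 − δ and e^ε·PFA(x₀,x₁,M,S) + PMD(x₀,x₁,M,S) ≥ 1 − δ hold. -/
open scoped ENNReal

/-- Probability that a sample from `μ` lands in `S`. -/
noncomputable def prIn {Y : Type} (μ : PMF Y) (S : Set Y) : ℝ≥0∞ :=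
  μ.toOuterMeasure S

/-- `(ε,δ)`-differential privacy for a randomized algorithm `M`
with respect to an adjacency relation `adj`. -/
def IsDP {X Y : Type} (adj : X → X → Prop) (M : X → PMF Y) (ε δ : ℝ) : Prop :=
  ∀ x₀ x₁, adj x₀ x₁ → ∀ S : Set Y,
    prIn (M x₀) S ≤ ENNReal.ofReal (Real.exp ε) * prIn (M x₁) S + ENNReal.ofReal δ

/-- Probability of false alarm (Type I error). -/
noncomputable def PFA {X Y : Type} (x₀ x₁ : X) (M : X → PMF Y) (S : Set Y) : ℝ≥0∞ :=
  prIn (M x₀) S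

/-- Probability of missed detection (Type II error). -/
noncomputable def PMD {X Y : Type} (x₀ x₁ : X) (M : X → PMF Y) (S : Set Y) : ℝ≥0∞ :=
  prIn (M x₁) Sᶜ

/-!
Since `Pr[M x₀ ∈ S] = 1 - Pr[M x₀ ∈ Sᶜ]`, the privacy inequality for the pair `(x₀, x₁)` and the
region `S` is the first error-rate inequality for `(x₀, x₁)` and the region `Sᶜ`, and it is the
second error-rate inequality for the swapped pair `(x₁, x₀)` and the region `S`. Symmetry of the
adjacency relation lets both readings range over all adjacent pairs.
-/

section prIn

variable {Y : Type}

lemma prIn_ne_top (μ : PMF Y) (S : Set Y) : prIn μ S ≠ ∞ := by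
  rw [prIn, PMF.toOuterMeasure_apply]
  exact μ.tsum_coe_indicator_ne_top S

lemma prIn_add_prIn_compl (μ : PMF Y) (S : Set Y) : prIn μ S + prIn μ Sᶜ = 1 := by
  rw [prIn, prIn, PMF.toOuterMeasure_apply, PMF.toOuterMeasure_apply, ← ENNReal.tsum_add,
    ← μ.tsum_coe]
  exact tsum_congr fun y => congrFun (S.indicator_self_add_compl μ) y

lemma prIn_le_mul_add_iff_one_sub_le (μ ν : PMF Y) (c d : ℝ≥0∞) (S : Set Y) :
    prIn μ S ≤ c * prIn ν S + d ↔ 1 - d ≤ prIn μ Sᶜ + c * prIn ν S := by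
  rw [tsub_le_iff_right, ← prIn_add_prIn_compl μ S, add_comm (prIn μ S), add_assoc,
    ENNReal.add_le_add_iff_left (prIn_ne_top μ Sᶜ)]

end prIn

theorem dp_iff_hypothesis_testing_general {X Y : Type}
    (adj : X → X → Prop) (hsymm : Symmetric adj)
    (M : X → PMF Y) (ε δ : ℝ) :
    IsDP adj M ε δ ↔
      ∀ x₀ x₁, adj x₀ x₁ → ∀ S : Set Y,
        (1 - ENNReal.ofReal δ ≤
            PFA x₀ x₁ M S + ENNReal.ofReal (Real.exp ε) * PMD x₀ x₁ M S) ∧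
        (1 - ENNReal.ofReal δ ≤
            ENNReal.ofReal (Real.exp ε) * PFA x₀ x₁ M S + PMD x₀ x₁ M S) := by
  simp only [IsDP, PFA, PMD, prIn_le_mul_add_iff_one_sub_le]
  constructor
  · intro hDP x₀ x₁ hadj S
    refine ⟨?_, ?_⟩
    · simpa only [compl_compl] using hDP x₀ x₁ hadj Sᶜ
    · simpa only [add_comm] using hDP x₁ x₀ (hsymm hadj) S
  · intro h x₀ x₁ hadj S
    simpa only [compl_compl] using (h x₀ x₁ hadj Sᶜ).1

/-- Hypothesis testing interpretation of `(ε,δ)`-differential privacy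
(Wasserman–Zhou, Kairouz–Oh–Viswanath). -/
theorem dp_iff_hypothesis_testing {X Y : Type}
    (adj : X → X → Prop) (hsymm : Symmetric adj)
    (M : X → PMF Y) (ε δ : ℝ) (hε : 0 < ε) (hδ0 : 0 ≤ δ) (hδ1 : δ ≤ 1) :
    IsDP adj M ε δ ↔
      ∀ x₀ x₁, adj x₀ x₁ → ∀ S : Set Y,
        (1 - ENNReal.ofReal δ ≤
            PFA x₀ x₁ M S + ENNReal.ofReal (Real.exp ε) * PMD x₀ x₁ M S) ∧
        (1 - ENNReal.ofReal δ ≤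
            ENNReal.ofReal (Real.exp ε) * PFA x₀ x₁ M S + PMD x₀ x₁ M S) :=
  dp_iff_hypothesis_testing_general adj hsymm M ε δ
end

section
/- For any divergence Δ (not necessarily satisfying the data-processing inequality), every k-cut of Δ satisfies the data-processing inequality: for all types X, Z, all μ₁, μ₂ ∈ PMF(X), and all probabilistic maps γ₁ : X → PMF(Z), one has Δ̄ᵏ_Z(γ₁(μ₁) ‖ γ₁(μ₂)) ≤ Δ̄ᵏ_X(μ₁ ‖ μ₂). -/
open scoped ENNReal

/-- A divergence: a family of functions `PMF X × PMF X → [0,∞]`, one for each type `X`. -/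
def Divergence : Type 1 := ∀ X : Type, PMF X → PMF X → ℝ≥0∞

/-- The cut of a divergence `Δ` with respect to a set `W`:
the supremum over probabilistic postprocessings into `W`. -/
noncomputable def cut (Δ : Divergence) (W : Type) : Divergence :=
  fun X μ₁ μ₂ => ⨆ γ : X → PMF W, Δ W (μ₁.bind γ) (μ₂.bind γ)

/-- The data-processing inequality for a divergence. -/
def DPI (Δ : Divergence) : Prop :=
  ∀ (X Y : Type) (γ : X → PMF Y) (μ₁ μ₂ : PMF X),
    Δ Y (μ₁.bind γ) (μ₂.bind γ) ≤ Δ X μ₁ μ₂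

/-- A divergence is `k`-generated if some `k`-cut of it equals the divergence itself. -/
def kGenerated (Δ : Divergence) (k : ℕ) : Prop :=
  ∃ W : Type, Nonempty (W ≃ Fin k) ∧ cut Δ W = Δ

/-- Every `k`-cut of any divergence satisfies the data-processing inequality. -/
theorem cut_satisfies_dpi (Δ : Divergence) (k : ℕ) (W : Type)
    (hW : Nonempty (W ≃ Fin k)) :
    ∀ (X Z : Type) (μ₁ μ₂ : PMF X) (γ₁ : X → PMF Z),
      cut Δ W Z (μ₁.bind γ₁) (μ₂.bind γ₁) ≤ cut Δ W X μ₁ μ₂ := by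
  intro X Z μ₁ μ₂ γ₁
  refine iSup_le fun γ => ?_
  calc Δ W ((μ₁.bind γ₁).bind γ) ((μ₂.bind γ₁).bind γ)
      = Δ W (μ₁.bind fun x => (γ₁ x).bind γ) (μ₂.bind fun x => (γ₁ x).bind γ) := by
        rw [PMF.bind_bind, PMF.bind_bind]
    _ ≤ _ := le_iSup (fun g : X → PMF W => Δ W (μ₁.bind g) (μ₂.bind g))
        (fun x => (γ₁ x).bind γ)
end

section
/- (Weak Birkhoff–von Neumann theorem.) Let k, l ∈ ℕ with k > l, and let X and Y be finite sets with |X| = k and |Y| = l. Then for every probabilistic map γ : X → PMF(Y) there exist N ∈ ℕ, deterministic functions γ₁, …, γ_N : X → Y, and weights a₁, …, a_N ∈ [0,1] with Σ_{m=1}^N a_m = 1 such that γ(x) = Σ_{m=1}^N a_m · δ_{γ_m(x)} for every x ∈ X. -/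
/-!
Give the deterministic map `g : X → Y` the weight `∏ x, γ x (g x)`, i.e. choose the values
`g x` independently with laws `γ x`. These weights sum to `1` because the sum of products
factorises as `∏ x, ∑ y, γ x y`, and the same factorisation shows that the law of the single
coordinate `g x` is `γ x`, which is the required identity `γ x = ∑ g, a g • δ_{g x}`.
-/

open scoped ENNReal
open Finset

theorem PMF.sum_coe_eq_one {α : Type*} [Fintype α] (p : PMF α) : ∑ a, p a = 1 := by
  rw [← tsum_fintype (L := SummationFilter.unconditional _)]
  exact p.tsum_coe

section ProductWeights

variable {X Y R : Type*} [Fintype X] [DecidableEq X] [Fintype Y] [CommSemiring R]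
  (p : X → Y → R)

theorem Fintype.sum_pi_prod_eq_one (hp : ∀ x, ∑ y, p x y = 1) :
    ∑ g : X → Y, ∏ x, p x (g x) = 1 := by
  rw [← Fintype.prod_sum]
  exact Finset.prod_eq_one fun x _ => hp x

theorem Fintype.sum_pi_prod_mul_apply (hp : ∀ x, ∑ y, p x y = 1) (q : Y → R) (x : X) :
    ∑ g : X → Y, (∏ x', p x' (g x')) * q (g x) = ∑ y, p x y * q y := by
  -- fold `q` into the `x`-th factor, so that the sum over `g` factorises again
  have fold (g : X → Y) : (∏ x', p x' (g x')) * q (g x)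
      = ∏ x', p x' (g x') * (if x' = x then q (g x') else 1) := by
    rw [prod_mul_distrib, Fintype.prod_ite_eq']
  have row (x' : X) : ∑ y, p x' y * (if x' = x then q y else 1)
      = if x' = x then ∑ y, p x y * q y else 1 := by
    split_ifs with h
    · rw [h]
    · simp only [mul_one]
      exact hp x'
  simp_rw [fold]
  rw [← Fintype.prod_sum fun x' y => p x' y * if x' = x then q y else 1]
  simp_rw [row, Fintype.prod_ite_eq']

end ProductWeights

theorem weak_birkhoff_von_neumann_general {X Y : Type} [Fintype X] [Fintype Y]
    (γ : X → PMF Y) :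
    ∃ (N : ℕ) (g : Fin N → X → Y) (a : Fin N → ℝ≥0∞),
      (∀ m, a m ≤ 1) ∧ (∑ m, a m = 1) ∧
      ∀ x y, γ x y = ∑ m, a m * (PMF.pure (g m x)) y := by
  classical
  have hγ (x : X) : ∑ y, γ x y = 1 := (γ x).sum_coe_eq_one
  let e := (Fintype.equivFin (X → Y)).symm
  refine ⟨_, e, fun m => ∏ x, γ x (e m x), fun m => prod_le_one' fun x _ => (γ x).coe_le_one _,
    ?_, fun x y => ?_⟩
  · rw [e.sum_comp fun g => ∏ x, γ x (g x)]
    exact Fintype.sum_pi_prod_eq_one _ hγ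
  · rw [e.sum_comp fun g => (∏ x', γ x' (g x')) * PMF.pure (g x) y,
      Fintype.sum_pi_prod_mul_apply _ hγ (fun z => PMF.pure z y) x]
    simp [PMF.pure_apply, mul_ite, sum_ite_eq]

/-- Weak Birkhoff–von Neumann theorem: every probabilistic map from a finite set of
cardinality `k` to a finite set of cardinality `l < k` is a finite convex combination
of deterministic maps (the convex combination being taken pointwise in `PMF Y`). -/
theorem weak_birkhoff_von_neumann {X Y : Type} [Fintype X] [Fintype Y]
    (k l : ℕ) (hX : Fintype.card X = k) (hY : Fintype.card Y = l) (hkl : k > l)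
    (γ : X → PMF Y) :
    ∃ (N : ℕ) (g : Fin N → X → Y) (a : Fin N → ℝ≥0∞),
      (∀ m, a m ≤ 1) ∧ (∑ m, a m = 1) ∧
      ∀ x y, γ x y = ∑ m, a m * (PMF.pure (g m x)) y :=
  weak_birkhoff_von_neumann_general γ
end

section
/- (Weak Birkhoff–von Neumann theorem, countable version.) Let X be a countably infinite set and Y a finite set with |Y| = l. Then for every probabilistic map γ : X → PMF(Y) there exist a countable index set I, deterministic functions γ_i : X → Y (i ∈ I), and weights a_i ∈ [0,1] with Σ_{i∈I} a_i = 1 such that γ(x) = Σ_{i∈I} a_i · δ_{γ_i(x)} for every x ∈ X. -/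
/-!
Every distribution on a finite set `Y` is the pushforward of one fixed distribution `μ` on a
countable set `I`; given that, choose for each `x` a map `g x : I → Y` pushing `μ` to `γ x`, and
`γ x = ∑ i, μ i • δ_{g x i}`.

For `Y = Bool` take `μ i = 2^{-(i+1)}` on `ℕ`: every `r ∈ [0, 1]` is the `μ`-mass of the set of
positions of the digits `1` in a binary expansion of `r`. A distribution `p` on `Option Y`
splits into the coin `p none` and the conditional law of `p` on `Y`, so `dyadic × μ_Y` serves
`Option Y` when `μ_Y` serves `Y`; induction over finite types does the rest.
-/

open scoped ENNReal

open Function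

theorem ENNReal.tsum_option {α : Type*} (f : Option α → ℝ≥0∞) :
    ∑' o, f o = f none + ∑' a, f (some a) := by
  rw [ENNReal.tsum_eq_add_tsum_ite none]
  congr 1
  convert ((Option.some_injective α).tsum_eq (f := fun o => if o = none then 0 else f o) ?_).symm
  · simp
  · rintro (_ | a) ho
    · simp at ho
    · exact ⟨a, rfl⟩

namespace PMF

variable {α β γ δ : Type*}

theorem map_apply_of_injective {f : α → β} (hf : f.Injective) (p : PMF α) (a : α) :
    p.map f (f a) = p a := by
  rw [map_apply, tsum_eq_single a fun b hb => if_neg (hf.ne hb).symm, if_pos rfl]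

theorem apply_false_eq_one_sub (p : PMF Bool) : p false = 1 - p true :=
  ENNReal.eq_sub_of_add_eq (p.apply_ne_top true) <| by
    simpa [tsum_fintype, add_comm] using p.tsum_coe

theorem ext_bool {p q : PMF Bool} (h : p true = q true) : p = q := by
  ext (_ | _)
  · rw [apply_false_eq_one_sub, apply_false_eq_one_sub, h]
  · exact h

noncomputable def dyadic : PMF ℕ :=
  ⟨fun n => 2⁻¹ ^ (n + 1), ENNReal.summable.hasSum_iff.mpr <| by
    rw [ENNReal.tsum_geometric_add_one, ENNReal.one_sub_inv_two, inv_inv,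
      ENNReal.inv_mul_cancel two_ne_zero ENNReal.ofNat_ne_top]⟩

theorem dyadic_apply (n : ℕ) : dyadic n = 2⁻¹ ^ (n + 1) := rfl

theorem surjective_map_dyadic : Surjective fun b : ℕ → Bool => dyadic.map b := by
  intro p
  obtain hp | hp := (p.coe_le_one true).eq_or_lt
  · exact ⟨fun _ => true, ext_bool (by simp [hp])⟩
  set x := (p true).toReal
  have hx : x ∈ Set.Ico 0 1 :=
    ⟨ENNReal.toReal_nonneg, ENNReal.toReal_lt_of_lt_ofReal (by simpa using hp)⟩
  refine ⟨fun n => Real.digits x 2 n = 1, ext_bool ?_⟩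
  calc (dyadic.map fun n => decide (Real.digits x 2 n = 1)) true
      = ∑' n, ENNReal.ofReal (Real.ofDigitsTerm (Real.digits x 2) n) := by
        rw [map_apply]
        refine tsum_congr fun n => ?_
        rw [Real.ofDigitsTerm, dyadic_apply]
        generalize Real.digits x 2 n = d
        fin_cases d
        · simp
        · simp [ENNReal.ofReal_inv_of_pos, ENNReal.inv_pow]
    _ = p true := by
        rw [← ENNReal.ofReal_tsum_of_nonneg (fun _ => Real.ofDigitsTerm_nonneg)
          Real.summable_ofDigitsTerm, (Real.hasSum_ofDigitsTerm_digits x one_lt_two hx).tsum_eq,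
          ENNReal.ofReal_toReal (p.apply_ne_top true)]

theorem map_isNone_apply_true (p : PMF (Option α)) : p.map Option.isNone true = p none := by
  rw [map_apply, ENNReal.tsum_option]
  simp

theorem map_isNone_apply_false (p : PMF (Option α)) :
    p.map Option.isNone false = ∑' a, p (some a) := by
  rw [map_apply, ENNReal.tsum_option]
  simp

theorem tsum_apply_some_ne_top (p : PMF (Option α)) : ∑' a, p (some a) ≠ ∞ :=
  ne_top_of_le_ne_top ENNReal.one_ne_top <|
    p.tsum_coe ▸ ENNReal.tsum_comp_le_tsum_of_injective (Option.some_injective α) p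

noncomputable def condSome (p : PMF (Option α)) (hs : ∑' a, p (some a) ≠ 0) : PMF α :=
  normalize (p ∘ some) hs p.tsum_apply_some_ne_top

theorem bind_map_isNone (p : PMF (Option α)) (hs : ∑' a, p (some a) ≠ 0) :
    (p.map Option.isNone).bind (fun t => if t then pure none else (p.condSome hs).map some) =
      p := by
  ext o
  rw [bind_apply, tsum_fintype, Fintype.sum_bool, map_isNone_apply_true, map_isNone_apply_false]
  cases o with
  | none => simp
  | some a =>
    simp only [if_true, Bool.false_eq_true, if_false, pure_apply, reduceCtorEq, mul_zero,
      zero_add]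
    rw [map_apply_of_injective (Option.some_injective α), condSome, normalize_apply,
      ← div_eq_mul_inv]
    exact ENNReal.mul_div_cancel hs p.tsum_apply_some_ne_top

theorem eq_pure_none_of_tsum_apply_some_eq_zero {p : PMF (Option α)}
    (hs : ∑' a, p (some a) = 0) : p = pure none := by
  ext (_ | a)
  · rw [pure_apply_self, ← p.tsum_coe, ENNReal.tsum_option, hs, add_zero]
  · simpa using ENNReal.tsum_eq_zero.mp hs a

noncomputable def prod (μ : PMF α) (ν : PMF β) : PMF (α × β) :=
  μ.bind fun a => ν.map (Prod.mk a)

theorem map_prod (μ : PMF α) (ν : PMF β) (c : α × β → γ) :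
    (μ.prod ν).map c = μ.bind fun a => ν.map fun b => c (a, b) := by
  simp only [prod, map_bind, map_comp]
  rfl

theorem surjective_map_prod_option {μ : PMF α} {ν : PMF β}
    (hμ : Surjective fun b : α → Bool => μ.map b) (hν : Surjective fun c : β → γ => ν.map c) :
    Surjective fun c : α × β → Option γ => (μ.prod ν).map c := by
  intro p
  by_cases hs : ∑' a, p (some a) = 0
  · exact ⟨fun _ => none,
      (map_const _ none).trans (eq_pure_none_of_tsum_apply_some_eq_zero hs).symm⟩
  obtain ⟨b, hb : μ.map b = p.map Option.isNone⟩ := hμ (p.map Option.isNone)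
  obtain ⟨c, hc : ν.map c = p.condSome hs⟩ := hν (p.condSome hs)
  refine ⟨fun ab => if b ab.1 then none else some (c ab.2), ?_⟩
  calc (μ.prod ν).map (fun ab => if b ab.1 then none else some (c ab.2))
      = μ.bind fun a => if b a then pure none else (p.condSome hs).map some := by
        rw [map_prod]
        congr with a : 1
        split
        · exact map_const ν none
        · rw [← hc, map_comp]
          rfl
    _ = (μ.map b).bind fun t => if t then pure none else (p.condSome hs).map some := by
        rw [bind_map]; rfl
    _ = p := by rw [hb]; exact bind_map_isNone p hs

theorem surjective_map_of_equiv {μ : PMF α} (h : Surjective fun c : α → γ => μ.map c)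
    (e : γ ≃ δ) : Surjective fun c : α → δ => μ.map c := by
  intro p
  obtain ⟨c, hc : μ.map c = p.map e.symm⟩ := h (p.map e.symm)
  refine ⟨e ∘ c, show μ.map (e ∘ c) = p from ?_⟩
  rw [← map_comp, hc, map_comp, e.self_comp_symm, map_id]

theorem exists_countable_surjective_map (γ : Type*) [Finite γ] :
    ∃ (α : Type) (_ : Countable α) (μ : PMF α), Surjective fun c : α → γ => μ.map c := by
  induction γ using Finite.induction_empty_option with
  | of_equiv e ih =>
    obtain ⟨α, hα, μ, h⟩ := ih
    exact ⟨α, hα, μ, surjective_map_of_equiv h e⟩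
  | h_empty => exact ⟨Unit, inferInstance, pure (), fun p => p.support_nonempty.some.elim⟩
  | h_option ih =>
    obtain ⟨α, hα, μ, h⟩ := ih
    exact ⟨ℕ × α, inferInstance, dyadic.prod μ,
      surjective_map_prod_option surjective_map_dyadic h⟩

end PMF

theorem weak_birkhoff_von_neumann_countable_general {X Y : Type}
    [Fintype Y]
    (γ : X → PMF Y) :
    ∃ (I : Type) (_ : Countable I) (g : I → X → Y) (a : I → ℝ≥0∞),
      (∀ i, a i ≤ 1) ∧ (∑' i, a i = 1) ∧
      ∀ x y, γ x y = ∑' i, a i * (PMF.pure (g i x)) y := by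
  obtain ⟨I, hI, μ, hμ⟩ := PMF.exists_countable_surjective_map Y
  choose g hg using fun x => hμ (γ x)
  refine ⟨I, hI, fun i x => g x i, μ, μ.coe_le_one, μ.tsum_coe, fun x y => ?_⟩
  rw [← hg x, PMF.map_apply]
  simp [PMF.pure_apply]

/-- Weak Birkhoff–von Neumann theorem, countable version: every probabilistic map from a
countably infinite set to a finite set of cardinality `l` is a countable convex combination
of deterministic maps (the convex combination being taken pointwise in `PMF Y`). -/
theorem weak_birkhoff_von_neumann_countable {X Y : Type}
    [Countable X] [Infinite X] [Fintype Y]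
    (l : ℕ) (hY : Fintype.card Y = l)
    (γ : X → PMF Y) :
    ∃ (I : Type) (_ : Countable I) (g : I → X → Y) (a : I → ℝ≥0∞),
      (∀ i, a i ≤ 1) ∧ (∑' i, a i = 1) ∧
      ∀ x y, γ x y = ∑' i, a i * (PMF.pure (g i x)) y :=
  weak_birkhoff_von_neumann_countable_general γ
end

section
/- If a divergence Δ satisfies the data-processing inequality, then Δ is ∞-generated (countably generated): for every type X and every pair μ₁, μ₂ ∈ PMF(X), Δ_X(μ₁‖μ₂) = sup over γ : X → PMF(ℕ) of Δ_ℕ(γ(μ₁)‖γ(μ₂)). -/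
open scoped ENNReal

/-- A divergence satisfying the data-processing inequality is `∞`-generated
(countably generated): it equals its cut with respect to `ℕ`. -/
theorem dpi_implies_countably_generated (Δ : Divergence) (hdpi : DPI Δ) :
    ∀ (X : Type) (μ₁ μ₂ : PMF X),
      Δ X μ₁ μ₂ = ⨆ γ : X → PMF ℕ, Δ ℕ (μ₁.bind γ) (μ₂.bind γ) := by
  classical
  intro X μ₁ μ₂
  apply le_antisymm
  · -- build an injective encoding of the (countable) supports into ℕ
    set S : Set X := μ₁.support ∪ μ₂.support with hS
    have hSc : S.Countable := (μ₁.support_countable).union (μ₂.support_countable)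
    obtain ⟨e, he⟩ := Set.countable_iff_exists_injective.mp hSc
    have hne : Nonempty S := by
      obtain ⟨x, hx⟩ := μ₁.support_nonempty
      exact ⟨⟨x, Or.inl hx⟩⟩
    let f : X → ℕ := fun x => if h : x ∈ S then e ⟨x, h⟩ else 0
    let g : ℕ → X := fun n => ((Function.invFun e n : S) : X)
    have hgf : ∀ x ∈ S, g (f x) = x := by
      intro x hx
      simp only [f, g, dif_pos hx]
      have := Function.leftInverse_invFun he ⟨x, hx⟩
      rw [this]
    have key : ∀ μ : PMF X, μ.support ⊆ S →
        (μ.bind (fun x => PMF.pure (f x))).bind (fun n => PMF.pure (g n)) = μ := by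
      intro μ hμ
      rw [PMF.bind_bind]
      have : μ.bind (fun x => (PMF.pure (f x)).bind (fun n => PMF.pure (g n)))
          = μ.bind PMF.pure := by
        ext y
        rw [PMF.bind_apply, PMF.bind_apply]
        refine tsum_congr fun x => ?_
        by_cases hx : μ x = 0
        · simp [hx]
        · have hxS : x ∈ S := hμ hx
          have : (PMF.pure (f x)).bind (fun n => PMF.pure (g n)) = PMF.pure x := by
            rw [PMF.pure_bind, hgf x hxS]
          rw [this]
      rw [this, PMF.bind_pure]
    calc Δ X μ₁ μ₂
        = Δ X ((μ₁.bind (fun x => PMF.pure (f x))).bind (fun n => PMF.pure (g n)))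
            ((μ₂.bind (fun x => PMF.pure (f x))).bind (fun n => PMF.pure (g n))) := by
          rw [key μ₁ (Set.subset_union_left), key μ₂ (Set.subset_union_right)]
      _ ≤ Δ ℕ (μ₁.bind (fun x => PMF.pure (f x))) (μ₂.bind (fun x => PMF.pure (f x))) :=
          hdpi ℕ X (fun n => PMF.pure (g n)) _ _
      _ ≤ ⨆ γ : X → PMF ℕ, Δ ℕ (μ₁.bind γ) (μ₂.bind γ) :=
          le_iSup (fun γ : X → PMF ℕ => Δ ℕ (μ₁.bind γ) (μ₂.bind γ)) _
  · exact iSup_le fun γ => hdpi X ℕ γ μ₁ μ₂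
end

section
/- For every divergence Δ and every k ∈ ℕ, the k-cut Δ̄ᵏ of Δ is itself k-generated, i.e., the k-cut of Δ̄ᵏ equals Δ̄ᵏ. -/
open scoped ENNReal

/-- Every `k`-cut of a divergence is itself `k`-generated. -/
theorem cut_kGenerated (Δ : Divergence) (k : ℕ) (W : Type) (hW : Nonempty (W ≃ Fin k)) :
    kGenerated (cut Δ W) k := by
  refine ⟨W, hW, ?_⟩
  funext X μ₁ μ₂
  apply le_antisymm
  · refine iSup_le fun γ => iSup_le fun δ => ?_
    refine le_trans (le_of_eq ?_) (le_iSup (fun γ => Δ W (μ₁.bind γ) (μ₂.bind γ))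
      (fun x => (γ x).bind δ))
    rw [PMF.bind_bind, PMF.bind_bind]
  · refine iSup_le fun γ => ?_
    refine le_trans ?_ (le_iSup (fun γ => cut Δ W W (μ₁.bind γ) (μ₂.bind γ)) γ)
    refine le_trans (le_of_eq ?_) (le_iSup (fun δ => Δ W ((μ₁.bind γ).bind δ)
      ((μ₂.bind γ).bind δ)) PMF.pure)
    rw [PMF.bind_pure, PMF.bind_pure]
end

section
/- Let Δ be a divergence and Δ′ a k-generated divergence. If Δ′_X(μ₁‖μ₂) ≤ Δ_X(μ₁‖μ₂) for all X, μ₁, μ₂, then Δ′_X(μ₁‖μ₂) ≤ Δ̄ᵏ_X(μ₁‖μ₂) for all X, μ₁, μ₂, where Δ̄ᵏ is any k-cut of Δ. Moreover, if Δ satisfies the data-processing inequality, then Δ′ ≤ Δ pointwise if and only if Δ′ ≤ Δ̄ᵏ ≤ Δ pointwise (so Δ̄ᵏ is the greatest k-generated divergence below Δ). -/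
open scoped ENNReal

/-- A `k`-generated divergence below `Δ` is below every `k`-cut of `Δ`; moreover if `Δ`
satisfies the data-processing inequality, the `k`-cut is the greatest `k`-generated
divergence below `Δ`. -/
theorem cut_greatest_kGenerated_below (Δ Δ' : Divergence) (k : ℕ)
    (hΔ' : kGenerated Δ' k) (W : Type) (hW : Nonempty (W ≃ Fin k)) :
    ((∀ (X : Type) (μ₁ μ₂ : PMF X), Δ' X μ₁ μ₂ ≤ Δ X μ₁ μ₂) →
      ∀ (X : Type) (μ₁ μ₂ : PMF X), Δ' X μ₁ μ₂ ≤ cut Δ W X μ₁ μ₂) ∧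
    (DPI Δ →
      ((∀ (X : Type) (μ₁ μ₂ : PMF X), Δ' X μ₁ μ₂ ≤ Δ X μ₁ μ₂) ↔
        ((∀ (X : Type) (μ₁ μ₂ : PMF X), Δ' X μ₁ μ₂ ≤ cut Δ W X μ₁ μ₂) ∧
         (∀ (X : Type) (μ₁ μ₂ : PMF X), cut Δ W X μ₁ μ₂ ≤ Δ X μ₁ μ₂)))) := by
  obtain ⟨W', ⟨e'⟩, hcut⟩ := hΔ'
  obtain ⟨e⟩ := hW
  set ε : W' ≃ W := e'.trans e.symm with hε
  have main : (∀ (X : Type) (μ₁ μ₂ : PMF X), Δ' X μ₁ μ₂ ≤ Δ X μ₁ μ₂) →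
      ∀ (X : Type) (μ₁ μ₂ : PMF X), Δ' X μ₁ μ₂ ≤ cut Δ W X μ₁ μ₂ := by
    intro h X μ₁ μ₂
    rw [← hcut]
    refine iSup_le fun γ' => ?_
    have step1 : ∀ (ν₁ ν₂ : PMF W'), Δ' W' ν₁ ν₂ ≤ Δ' W (ν₁.map ε) (ν₂.map ε) := by
      intro ν₁ ν₂
      conv_rhs => rw [← hcut]
      have := le_iSup (fun γ : W → PMF W' =>
        Δ' W' ((ν₁.map ε).bind γ) ((ν₂.map ε).bind γ)) (fun w => PMF.pure (ε.symm w))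
      simpa [cut, PMF.bind_map, Function.comp_def, Equiv.symm_apply_apply, PMF.bind_pure] using this
    calc Δ' W' (μ₁.bind γ') (μ₂.bind γ')
        ≤ Δ' W ((μ₁.bind γ').map ε) ((μ₂.bind γ').map ε) := step1 _ _
      _ ≤ Δ W ((μ₁.bind γ').map ε) ((μ₂.bind γ').map ε) := h _ _ _
      _ ≤ cut Δ W X μ₁ μ₂ := by
          have := le_iSup (fun γ : X → PMF W =>
            Δ W (μ₁.bind γ) (μ₂.bind γ)) (fun x => (γ' x).map ε)
          simpa [cut, PMF.map_bind] using this
  refine ⟨main, fun hDPI => ⟨fun h => ⟨main h, fun X μ₁ μ₂ => ?_⟩,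
    fun ⟨h1, h2⟩ X μ₁ μ₂ => (h1 X μ₁ μ₂).trans (h2 X μ₁ μ₂)⟩⟩
  exact iSup_le fun γ => hDPI X W γ μ₁ μ₂
end

section
/- Let Δ be a divergence satisfying the data-processing inequality and Δ′ a k-generated divergence, and let δ, ρ ∈ [0,∞]. Then the implication (Δ_X(μ₁‖μ₂) ≤ δ ⟹ Δ′_X(μ₁‖μ₂) ≤ ρ) holds for all types X and all μ₁, μ₂ ∈ PMF(X) if and only if the implication (Δ̄ᵏ_X(μ₁‖μ₂) ≤ δ ⟹ Δ′_X(μ₁‖μ₂) ≤ ρ) holds for all X and all μ₁, μ₂ ∈ PMF(X). -/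
open scoped ENNReal

/-- Extended comparison lemma: for a divergence `Δ` with the data-processing inequality
and a `k`-generated divergence `Δ'`, the conversion implication from `Δ` to `Δ'` holds
universally iff it holds universally for the `k`-cut of `Δ`. -/
theorem conversion_iff_conversion_cut (Δ Δ' : Divergence) (k : ℕ)
    (hdpi : DPI Δ) (hΔ' : kGenerated Δ' k) (W : Type) (hW : Nonempty (W ≃ Fin k))
    (δ ρ : ℝ≥0∞) :
    (∀ (X : Type) (μ₁ μ₂ : PMF X), Δ X μ₁ μ₂ ≤ δ → Δ' X μ₁ μ₂ ≤ ρ) ↔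
    (∀ (X : Type) (μ₁ μ₂ : PMF X), cut Δ W X μ₁ μ₂ ≤ δ → Δ' X μ₁ μ₂ ≤ ρ) := by
  constructor
  · intro h X μ₁ μ₂ hcut
    obtain ⟨W', ⟨e'⟩, hW'⟩ := hΔ'
    obtain ⟨eW⟩ := hW
    have e : W' ≃ W := e'.trans eW.symm
    rw [← hW', cut]
    refine iSup_le fun γ => ?_
    refine h W' (μ₁.bind γ) (μ₂.bind γ) ?_
    have key : ∀ μ : PMF X, ((μ.bind γ).map e).map e.symm = μ.bind γ := by
      intro μ
      rw [PMF.map_comp]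
      simp [Equiv.symm_comp_self, PMF.map_id]
    have h1 : Δ W' (μ₁.bind γ) (μ₂.bind γ)
        ≤ Δ W ((μ₁.bind γ).map e) ((μ₂.bind γ).map e) := by
      have := hdpi W W' (fun w => PMF.pure (e.symm w))
        ((μ₁.bind γ).map e) ((μ₂.bind γ).map e)
      simpa [PMF.map, key] using this
    refine h1.trans ?_
    have h2 : ∀ μ : PMF X, (μ.bind γ).map e = μ.bind (fun x => (γ x).map e) := by
      intro μ; rw [PMF.map_bind]
    rw [h2, h2]
    exact le_trans (le_iSup (fun γ' : X → PMF W => Δ W (μ₁.bind γ') (μ₂.bind γ'))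
      (fun x => (γ x).map e)) hcut
  · intro h X μ₁ μ₂ hΔle
    refine h X μ₁ μ₂ ?_
    refine iSup_le fun γ => ?_
    exact (hdpi X W γ μ₁ μ₂).trans hΔle
end

section
/- For every ε ≥ 0, the ε-divergence Δ^ε is 2-generated: for every type X and all μ₁, μ₂ ∈ PMF(X), Δ^ε_X(μ₁‖μ₂) equals the supremum over all probabilistic maps γ : X → PMF({Acc, Rej}) of Δ^ε_{{Acc,Rej}}(γ(μ₁)‖γ(μ₂)). -/
open scoped ENNReal

/-- The `ε`-divergence `Δ^ε_X(μ₁‖μ₂) = sup_{S ⊆ X} (Pr[μ₁ ∈ S] − e^ε·Pr[μ₂ ∈ S])`. -/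
noncomputable def epsDiv (ε : ℝ) (X : Type) (μ₁ μ₂ : PMF X) : ℝ≥0∞ :=
  ⨆ S : Set X,
    (μ₁.toOuterMeasure S - ENNReal.ofReal (Real.exp ε) * μ₂.toOuterMeasure S)

/-- A two-element set of decisions. -/
inductive Decision : Type
  | Acc : Decision
  | Rej : Decision

/-!
A randomized test `γ` accepts each `x` with some weight `g x ∈ [0, 1]`, and for such a weight
`a * g ≤ (a - c * b) + c * (b * g)` in `ℝ≥0∞`. Summing, the advantage of any test is at most
`∑ₓ (μ₁ x - e^ε μ₂ x)`, which the set `{x | e^ε μ₂ x < μ₁ x}` attains. Conversely every set `S`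
is the acceptance region of the deterministic test `x ↦ if x ∈ S then Acc else Rej`.
-/

theorem PMF.toOuterMeasure_apply_le_one {X : Type*} (p : PMF X) (s : Set X) :
    p.toOuterMeasure s ≤ 1 := by
  rw [PMF.toOuterMeasure_apply, ← p.tsum_coe]
  exact ENNReal.tsum_le_tsum (s.indicator_le_self p)

theorem ENNReal.mul_le_tsub_add_mul {a b c : ℝ≥0∞} (hc : c ≤ 1) : a * c ≤ (a - b) + b * c := by
  rcases le_total a b with hab | hba
  · exact (mul_le_mul_left hab c).trans le_add_self
  · calc a * c = (a - b) * c + b * c := by rw [← add_mul, tsub_add_cancel_of_le hba]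
      _ ≤ (a - b) + b * c := by gcongr; exact mul_le_of_le_one_right' hc

theorem ENNReal.tsum_mul_tsub_mul_tsum_mul_le {X : Type*} (μ ν g : X → ℝ≥0∞) (hg : ∀ x, g x ≤ 1)
    (c : ℝ≥0∞) : ∑' x, μ x * g x - c * ∑' x, ν x * g x ≤ ∑' x, (μ x - c * ν x) := by
  rw [tsub_le_iff_right, ← ENNReal.tsum_mul_left, ← ENNReal.tsum_add]
  refine ENNReal.tsum_le_tsum fun x => ?_
  rw [← mul_assoc]
  exact ENNReal.mul_le_tsub_add_mul (hg x)

theorem PMF.tsum_tsub_le_toOuterMeasure_tsub {X : Type*} (μ ν : PMF X) {c : ℝ≥0∞} (hc : c ≠ ∞) :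
    ∑' x, (μ x - c * ν x) ≤
      μ.toOuterMeasure {x | c * ν x < μ x} - c * ν.toOuterMeasure {x | c * ν x < μ x} := by
  set S := {x | c * ν x < μ x}
  have hνS : c * ν.toOuterMeasure S ≠ ∞ :=
    ENNReal.mul_ne_top hc ((ν.toOuterMeasure_apply_le_one S).trans_lt ENNReal.one_lt_top).ne
  refine ENNReal.le_sub_of_add_le_right hνS ?_
  rw [PMF.toOuterMeasure_apply, PMF.toOuterMeasure_apply, ← ENNReal.tsum_mul_left,
    ← ENNReal.tsum_add]
  refine ENNReal.tsum_le_tsum fun x => ?_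
  by_cases hx : c * ν x < μ x
  · simp only [Set.indicator_of_mem (show x ∈ S from hx)]
    exact (tsub_add_cancel_of_le hx.le).le
  · simp [Set.indicator_of_notMem (show x ∉ S from hx), tsub_eq_zero_of_le (not_lt.1 hx)]

theorem tsum_tsub_le_epsDiv (ε : ℝ) {X : Type} (μ₁ μ₂ : PMF X) :
    ∑' x, (μ₁ x - ENNReal.ofReal (Real.exp ε) * μ₂ x) ≤ epsDiv ε X μ₁ μ₂ :=
  (μ₁.tsum_tsub_le_toOuterMeasure_tsub μ₂ ENNReal.ofReal_ne_top).trans (le_iSup_of_le _ le_rfl)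

theorem epsDiv_bind_le (ε : ℝ) {X Y : Type} (μ₁ μ₂ : PMF X) (γ : X → PMF Y) :
    epsDiv ε Y (μ₁.bind γ) (μ₂.bind γ) ≤ epsDiv ε X μ₁ μ₂ := by
  refine iSup_le fun T => ?_
  calc (μ₁.bind γ).toOuterMeasure T - ENNReal.ofReal (Real.exp ε) * (μ₂.bind γ).toOuterMeasure T
      = ∑' x, μ₁ x * (γ x).toOuterMeasure T
          - ENNReal.ofReal (Real.exp ε) * ∑' x, μ₂ x * (γ x).toOuterMeasure T := by
        rw [PMF.toOuterMeasure_bind_apply, PMF.toOuterMeasure_bind_apply]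
    _ ≤ ∑' x, (μ₁ x - ENNReal.ofReal (Real.exp ε) * μ₂ x) :=
        ENNReal.tsum_mul_tsub_mul_tsum_mul_le _ _ _ (fun x => (γ x).toOuterMeasure_apply_le_one T) _
    _ ≤ epsDiv ε X μ₁ μ₂ := tsum_tsub_le_epsDiv ε μ₁ μ₂

theorem epsDiv_two_generated_general (ε : ℝ) (X : Type) (μ₁ μ₂ : PMF X) :
    epsDiv ε X μ₁ μ₂ =
      ⨆ γ : X → PMF Decision, epsDiv ε Decision (μ₁.bind γ) (μ₂.bind γ) := by
  classical
  refine le_antisymm (iSup_le fun S => ?_) (iSup_le fun γ => epsDiv_bind_le ε μ₁ μ₂ γ)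
  let test : X → Decision := fun x => if x ∈ S then .Acc else .Rej
  have htest : test ⁻¹' {.Acc} = S := by ext x; by_cases hx : x ∈ S <;> simp [test, hx]
  refine le_iSup_of_le (PMF.pure ∘ test) (le_iSup_of_le {.Acc} ?_)
  rw [PMF.bind_pure_comp, PMF.bind_pure_comp, PMF.toOuterMeasure_map_apply,
    PMF.toOuterMeasure_map_apply, htest]

/-- The `ε`-divergence is `2`-generated: it equals its `2`-cut. -/
theorem epsDiv_two_generated (ε : ℝ) (hε : 0 ≤ ε) (X : Type) (μ₁ μ₂ : PMF X) :
    epsDiv ε X μ₁ μ₂ =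
      ⨆ γ : X → PMF Decision, epsDiv ε Decision (μ₁.bind γ) (μ₂.bind γ) :=
  epsDiv_two_generated_general ε X μ₁ μ₂
end

section
/- Let α > 1, β > α + 1, and p = (1/2)^{β/(α−1)}. Let X = {a,b,c}, let μ₁ be the uniform distribution on X, and let μ₂(a) = p²/(p²+p+1), μ₂(b) = p/(p²+p+1), μ₂(c) = 1/(p²+p+1). Then the 2-cut of Rényi divergence satisfies the quantitative gap D̄²ᵅ_X(μ₁‖μ₂) + (1/(α−1))·log min( (2^β + 2^{−β} + 1)/2^{α+1}, (2^β + 2^{−β} + 1)/(2^β + 1) ) ≤ Dᵅ_X(μ₁‖μ₂); in particular the logarithmic term is strictly positive, so D̄²ᵅ_X(μ₁‖μ₂) < Dᵅ_X(μ₁‖μ₂) and the Rényi divergence of order α is not 2-generated. -/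
open scoped ENNReal

/-- The Rényi divergence of order `α` between two discrete distributions. -/
noncomputable def renyi (α : ℝ) (X : Type) (μ₁ μ₂ : PMF X) : ℝ :=
  (α - 1)⁻¹ * Real.log (∑' x, (μ₂ x).toReal * ((μ₁ x).toReal / (μ₂ x).toReal) ^ α)

instance : DecidableEq Decision := fun a b => by
  cases a <;> cases b <;> first
    | exact isTrue rfl
    | exact isFalse (fun h => Decision.noConfusion h)

instance : Fintype Decision where
  elems := {Decision.Acc, Decision.Rej}
  complete := by intro x; cases x <;> simp

lemma decision_tsum {M : Type*} [AddCommMonoid M] [TopologicalSpace M] [T2Space M]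
    (f : Decision → M) : ∑' d, f d = f Decision.Acc + f Decision.Rej := by
  rw [tsum_fintype]
  change ∑ d ∈ ({Decision.Acc, Decision.Rej} : Finset Decision), f d = _
  rw [Finset.sum_pair (fun h => Decision.noConfusion h)]

/-- auxiliary: the integrand in the Rényi sum. -/
noncomputable def Fq (α x y : ℝ) : ℝ := y * (x / y) ^ α

lemma Fq_eval {α x y : ℝ} (hx : 0 ≤ x) (hy : 0 < y) :
    Fq α x y = x ^ α * y ^ (1 - α) := by
  unfold Fq
  rw [Real.div_rpow hx hy.le, Real.rpow_sub hy, Real.rpow_one]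
  field_simp

lemma Fq_zero_left {α y : ℝ} (hα : α ≠ 0) : Fq α 0 y = 0 := by
  unfold Fq
  rw [zero_div, Real.zero_rpow hα, mul_zero]

lemma Fq_zero_right {α x : ℝ} : Fq α x 0 = 0 := by
  unfold Fq; rw [zero_mul]

lemma Fq_one_one {α : ℝ} : Fq α 1 1 = 1 := by
  unfold Fq; norm_num

lemma Fq_nonneg {α x y : ℝ} (hx : 0 ≤ x) (hy : 0 ≤ y) : 0 ≤ Fq α x y :=
  mul_nonneg hy (Real.rpow_nonneg (div_nonneg hx hy) α)

lemma Fq_pos {α x y : ℝ} (hx : 0 < x) (hy : 0 < y) : 0 < Fq α x y :=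
  mul_pos hy (Real.rpow_pos_of_pos (div_pos hx hy) α)

/-- Young / tangent-line inequality for `t ↦ t^α`. -/
lemma young {α c x y : ℝ} (hα : 1 < α) (hc : 0 ≤ c) (hx : 0 ≤ x) (hy : 0 ≤ y)
    (hxy : y = 0 → x = 0) :
    α * c ^ (α - 1) * x - (α - 1) * c ^ α * y ≤ Fq α x y := by
  rcases eq_or_lt_of_le hy with hy0 | hy0
  · have hx0 : x = 0 := hxy hy0.symm
    rw [hx0, ← hy0, Fq_zero_right]
    ring_nf
    exact le_refl 0
  rcases eq_or_lt_of_le hc with hc0 | hc0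
  · rw [← hc0, Real.zero_rpow (by linarith : α - 1 ≠ 0),
      Real.zero_rpow (by linarith : α ≠ 0)]
    simpa using Fq_nonneg hx hy
  · rw [Fq_eval hx hy0]
    have hcy : 0 < c * y := mul_pos hc0 hy0
    have ht : -1 ≤ x / (c * y) - 1 := by
      have : 0 ≤ x / (c * y) := div_nonneg hx hcy.le
      linarith
    have hb := one_add_mul_self_le_rpow_one_add ht hα.le
    rw [add_sub_cancel] at hb
    have hpos : (0:ℝ) < c ^ α * y := mul_pos (Real.rpow_pos_of_pos hc0 α) hy0
    have hmul := mul_le_mul_of_nonneg_left hb hpos.le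
    have hcα : c ^ α ≠ 0 := (Real.rpow_pos_of_pos hc0 α).ne'
    have hyα : y ^ α ≠ 0 := (Real.rpow_pos_of_pos hy0 α).ne'
    have e1 : (c ^ α * y) * (1 + α * (x / (c * y) - 1))
        = α * c ^ (α - 1) * x - (α - 1) * c ^ α * y := by
      rw [Real.rpow_sub hc0, Real.rpow_one]
      field_simp
      ring
    have e2 : (c ^ α * y) * (x / (c * y)) ^ α = x ^ α * y ^ (1 - α) := by
      rw [Real.div_rpow hx hcy.le, Real.mul_rpow hc0.le hy0.le,
        Real.rpow_sub hy0, Real.rpow_one]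
      field_simp
    linarith [hmul, e1.symm.le, e2.le]

/-- equality case of Young at `c = x / y`. -/
lemma young_eq {α x y : ℝ} (hα : 1 < α) (hx : 0 ≤ x) (hy : 0 < y) :
    α * (x / y) ^ (α - 1) * x - (α - 1) * (x / y) ^ α * y = Fq α x y := by
  rcases eq_or_lt_of_le hx with hx0 | hx0
  · rw [← hx0, Fq_zero_left (by linarith : α ≠ 0), zero_div,
      Real.zero_rpow (by linarith : α - 1 ≠ 0), Real.zero_rpow (by linarith : α ≠ 0)]
    ring
  · rw [Fq_eval hx hy]
    have hxα : x ^ α ≠ 0 := (Real.rpow_pos_of_pos hx0 α).ne'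
    have hyα : y ^ α ≠ 0 := (Real.rpow_pos_of_pos hy α).ne'
    rw [Real.div_rpow hx hy.le, Real.div_rpow hx hy.le,
      Real.rpow_sub hx0, Real.rpow_sub hy, Real.rpow_sub hy]
    simp only [Real.rpow_one]
    field_simp
    ring

lemma Fq_div_eq {α s k W : ℝ} (hα : 1 < α) (hs : 0 < s) (hk : 0 ≤ k) (hW : 0 ≤ W) :
    Fq α (k / 3) (W / s) = (1/3 : ℝ) ^ α * s ^ (α - 1) * (k ^ α * W ^ (1 - α)) := by
  rcases eq_or_lt_of_le hW with hW0 | hW0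
  · rw [← hW0, zero_div, Fq_zero_right, Real.zero_rpow (by linarith : (1:ℝ) - α ≠ 0)]
    ring
  · rw [Fq_eval (div_nonneg hk (by norm_num)) (div_pos hW0 hs),
      Real.div_rpow hk (by norm_num : (0:ℝ) ≤ 3), Real.div_rpow hW0.le hs.le]
    have h1 : s ^ (α - 1) = (s ^ (1 - α))⁻¹ := by
      rw [← Real.rpow_neg hs.le]; congr 1; ring
    have h2 : (1/3 : ℝ) ^ α = ((3:ℝ) ^ α)⁻¹ := by
      rw [one_div, Real.inv_rpow (by norm_num : (0:ℝ) ≤ 3)]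
    have h3 : ((3:ℝ)) ^ α ≠ 0 := (Real.rpow_pos_of_pos (by norm_num) α).ne'
    have h4 : s ^ (1 - α) ≠ 0 := (Real.rpow_pos_of_pos hs (1 - α)).ne'
    rw [h1, h2]
    field_simp

lemma term_le {α s k W V : ℝ} (hα : 1 < α) (hs : 0 < s) (hk : 0 ≤ k) (hW : 0 ≤ W)
    (hV : k ^ α * W ^ (1 - α) ≤ V) :
    Fq α (k / 3) (W / s) ≤ (1/3 : ℝ) ^ α * s ^ (α - 1) * V := by
  rw [Fq_div_eq hα hs hk hW]
  have hpos : (0:ℝ) < (1/3 : ℝ) ^ α * s ^ (α - 1) :=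
    mul_pos (Real.rpow_pos_of_pos (by norm_num) α) (Real.rpow_pos_of_pos hs (α - 1))
  exact mul_le_mul_of_nonneg_left hV hpos.le

lemma corner_le {α p : ℝ} (hα : 1 < α) (hp0 : 0 < p) (hp1 : p ≤ 1)
    (h2E : (2:ℝ) ^ α ≤ p ^ (1 - α)) (e₀ e₁ e₂ : ℝ)
    (he₀ : e₀ = 0 ∨ e₀ = 1) (he₁ : e₁ = 0 ∨ e₁ = 1) (he₂ : e₂ = 0 ∨ e₂ = 1) :
    Fq α ((e₀ + e₁ + e₂) / 3) ((p^2 * e₀ + p * e₁ + e₂) / (p^2 + p + 1))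
      + Fq α (1 - (e₀ + e₁ + e₂) / 3) (1 - (p^2 * e₀ + p * e₁ + e₂) / (p^2 + p + 1))
      ≤ (1/3 : ℝ) ^ α * (p^2 + p + 1) ^ (α - 1)
        * (p ^ (1 - α) * p ^ (1 - α) + p ^ (1 - α)) := by
  have hs0 : (0:ℝ) < p^2 + p + 1 := by positivity
  have hsne : (p^2 + p + 1 : ℝ) ≠ 0 := hs0.ne'
  have hE0 : 0 < p ^ (1 - α) := Real.rpow_pos_of_pos hp0 _
  have h2pos : (0:ℝ) < (2:ℝ) ^ α := Real.rpow_pos_of_pos (by norm_num) α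
  have h12 : (1:ℝ) ≤ (2:ℝ) ^ α := Real.one_le_rpow one_le_two (by linarith)
  have hE1 : 1 ≤ p ^ (1 - α) := h12.trans h2E
  have hp2E : (p^2 : ℝ) ^ (1-α) = p ^ (1-α) * p ^ (1-α) := by
    rw [pow_two, Real.mul_rpow hp0.le hp0.le]
  have t1 : (1:ℝ) ^ α * (p^2) ^ (1-α) ≤ p ^ (1-α) * p ^ (1-α) := by
    rw [Real.one_rpow, one_mul, hp2E]
  have t2 : (1:ℝ) ^ α * p ^ (1-α) ≤ p ^ (1-α) := by
    rw [Real.one_rpow, one_mul]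
  have t3 : (1:ℝ) ^ α * (1:ℝ) ^ (1-α) ≤ p ^ (1-α) := by
    rw [Real.one_rpow, Real.one_rpow, one_mul]; exact hE1
  have hple : ∀ W : ℝ, 1 ≤ W → (2:ℝ) ^ α * W ^ (1-α) ≤ p ^ (1-α) := by
    intro W hW
    calc (2:ℝ) ^ α * W ^ (1-α) ≤ (2:ℝ) ^ α * 1 :=
          mul_le_mul_of_nonneg_left
            (Real.rpow_le_one_of_one_le_of_nonpos hW (by linarith)) h2pos.le
      _ = (2:ℝ) ^ α := mul_one _
      _ ≤ _ := h2E
  have t4 : (2:ℝ) ^ α * (p+1) ^ (1-α) ≤ p ^ (1-α) := hple _ (by linarith)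
  have t5 : (2:ℝ) ^ α * (p^2+1) ^ (1-α) ≤ p ^ (1-α) * p ^ (1-α) :=
    (hple _ (by nlinarith)).trans (le_mul_of_one_le_left hE0.le hE1)
  have t6 : (2:ℝ) ^ α * (p^2+p) ^ (1-α) ≤ p ^ (1-α) * p ^ (1-α) := by
    calc (2:ℝ) ^ α * (p^2+p) ^ (1-α) ≤ (2:ℝ) ^ α * p ^ (1-α) :=
          mul_le_mul_of_nonneg_left
            (Real.rpow_le_rpow_of_nonpos hp0 (by nlinarith) (by linarith)) h2pos.le
      _ ≤ p ^ (1-α) * p ^ (1-α) := mul_le_mul_of_nonneg_right h2E hE0.le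
  have hKpos : (0:ℝ) < (1/3 : ℝ) ^ α * (p^2 + p + 1) ^ (α - 1) :=
    mul_pos (Real.rpow_pos_of_pos (by norm_num) α) (Real.rpow_pos_of_pos hs0 _)
  have honele : (1:ℝ) ≤ (1/3 : ℝ) ^ α * (p^2 + p + 1) ^ (α - 1)
      * (p ^ (1 - α) * p ^ (1 - α) + p ^ (1 - α)) := by
    have hs1 : ((p^2+p+1:ℝ)) ^ (1-α) ≤ 1 :=
      Real.rpow_le_one_of_one_le_of_nonpos (by nlinarith) (by linarith)
    have h34 : (3:ℝ) ^ α ≤ (2:ℝ) ^ α * (2:ℝ) ^ α := by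
      have h4 : (3:ℝ) ^ α ≤ (4:ℝ) ^ α :=
        Real.rpow_le_rpow (by norm_num) (by norm_num) (by linarith)
      rwa [show (4:ℝ) = 2 * 2 by norm_num,
        Real.mul_rpow (by norm_num) (by norm_num)] at h4
    have h3E : (3:ℝ) ^ α * (p^2+p+1) ^ (1-α)
        ≤ p ^ (1-α) * p ^ (1-α) + p ^ (1-α) := by
      have h3pos : (0:ℝ) < (3:ℝ) ^ α := Real.rpow_pos_of_pos (by norm_num) α
      calc (3:ℝ) ^ α * (p^2+p+1) ^ (1-α) ≤ (3:ℝ) ^ α * 1 :=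
            mul_le_mul_of_nonneg_left hs1 h3pos.le
        _ = (3:ℝ) ^ α := mul_one _
        _ ≤ (2:ℝ) ^ α * (2:ℝ) ^ α := h34
        _ ≤ p ^ (1-α) * p ^ (1-α) := mul_le_mul h2E h2E h2pos.le hE0.le
        _ ≤ _ := by linarith
    have hKs : (1/3 : ℝ) ^ α * (p^2 + p + 1) ^ (α - 1)
        * ((3:ℝ) ^ α * (p^2+p+1) ^ (1-α)) = 1 := by
      rw [show (1/3 : ℝ) ^ α * (p^2 + p + 1) ^ (α - 1)
            * ((3:ℝ) ^ α * (p^2+p+1) ^ (1-α))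
          = ((1/3 : ℝ) ^ α * (3:ℝ) ^ α)
            * ((p^2+p+1) ^ (α-1) * (p^2+p+1) ^ (1-α)) by ring,
        ← Real.mul_rpow (by norm_num) (by norm_num : (0:ℝ) ≤ 3),
        ← Real.rpow_add hs0]
      norm_num
    calc (1:ℝ) = (1/3 : ℝ) ^ α * (p^2 + p + 1) ^ (α - 1)
          * ((3:ℝ) ^ α * (p^2+p+1) ^ (1-α)) := hKs.symm
      _ ≤ _ := mul_le_mul_of_nonneg_left h3E hKpos.le
  have hcomp : ∀ W : ℝ, 1 - W/(p^2+p+1) = ((p^2+p+1) - W)/(p^2+p+1) := by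
    intro W; field_simp
  have h02 : (0:ℝ) ≤ 2 := by norm_num
  rcases he₀ with rfl | rfl <;> rcases he₁ with rfl | rfl <;> rcases he₂ with rfl | rfl
  · -- (0,0,0)
    norm_num
    rw [Fq_zero_right, Fq_one_one]
    linarith
  · -- (0,0,1)
    rw [show ((0:ℝ)+0+1)/3 = 1/3 by norm_num,
      show (p^2*0+p*0+1 : ℝ) = 1 by ring,
      show (1:ℝ) - 1/3 = 2/3 by norm_num,
      hcomp, show (p^2+p+1 : ℝ) - 1 = p^2+p by ring]
    refine le_trans (add_le_add
      (term_le hα hs0 zero_le_one (by norm_num) t3)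
      (term_le hα hs0 h02 (by positivity) t6)) (le_of_eq (by ring))
  · -- (0,1,0)
    rw [show ((0:ℝ)+1+0)/3 = 1/3 by norm_num,
      show (p^2*0+p*1+0 : ℝ) = p by ring,
      show (1:ℝ) - 1/3 = 2/3 by norm_num,
      hcomp, show (p^2+p+1 : ℝ) - p = p^2+1 by ring]
    refine le_trans (add_le_add
      (term_le hα hs0 zero_le_one hp0.le t2)
      (term_le hα hs0 h02 (by positivity) t5)) (le_of_eq (by ring))
  · -- (0,1,1)
    rw [show ((0:ℝ)+1+1)/3 = 2/3 by norm_num,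
      show (p^2*0+p*1+1 : ℝ) = p+1 by ring,
      show (1:ℝ) - 2/3 = 1/3 by norm_num,
      hcomp, show (p^2+p+1 : ℝ) - (p+1) = p^2 by ring]
    refine le_trans (add_le_add
      (term_le hα hs0 h02 (by positivity) t4)
      (term_le hα hs0 zero_le_one (by positivity) t1)) (le_of_eq (by ring))
  · -- (1,0,0)
    rw [show ((1:ℝ)+0+0)/3 = 1/3 by norm_num,
      show (p^2*1+p*0+0 : ℝ) = p^2 by ring,
      show (1:ℝ) - 1/3 = 2/3 by norm_num,
      hcomp, show (p^2+p+1 : ℝ) - p^2 = p+1 by ring]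
    refine le_trans (add_le_add
      (term_le hα hs0 zero_le_one (by positivity) t1)
      (term_le hα hs0 h02 (by positivity) t4)) (le_of_eq (by ring))
  · -- (1,0,1)
    rw [show ((1:ℝ)+0+1)/3 = 2/3 by norm_num,
      show (p^2*1+p*0+1 : ℝ) = p^2+1 by ring,
      show (1:ℝ) - 2/3 = 1/3 by norm_num,
      hcomp, show (p^2+p+1 : ℝ) - (p^2+1) = p by ring]
    refine le_trans (add_le_add
      (term_le hα hs0 h02 (by positivity) t5)
      (term_le hα hs0 zero_le_one hp0.le t2)) (le_of_eq (by ring))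
  · -- (1,1,0)
    rw [show ((1:ℝ)+1+0)/3 = 2/3 by norm_num,
      show (p^2*1+p*1+0 : ℝ) = p^2+p by ring,
      show (1:ℝ) - 2/3 = 1/3 by norm_num,
      hcomp, show (p^2+p+1 : ℝ) - (p^2+p) = 1 by ring]
    refine le_trans (add_le_add
      (term_le hα hs0 h02 (by positivity) t6)
      (term_le hα hs0 zero_le_one (by norm_num) t3)) (le_of_eq (by ring))
  · -- (1,1,1)
    rw [show ((1:ℝ)+1+1)/3 = 1 by norm_num,
      show (p^2*1+p*1+1 : ℝ)/(p^2+p+1) = 1 from by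
        rw [mul_one, mul_one]; exact div_self hsne,
      sub_self, Fq_one_one, Fq_zero_right]
    linarith

lemma cube_facts {p e₀ e₁ e₂ : ℝ} (hp0 : 0 < p)
    (h₀0 : 0 ≤ e₀) (h₀1 : e₀ ≤ 1) (h₁0 : 0 ≤ e₁) (h₁1 : e₁ ≤ 1)
    (h₂0 : 0 ≤ e₂) (h₂1 : e₂ ≤ 1) :
    0 ≤ (e₀ + e₁ + e₂) / 3 ∧ (e₀ + e₁ + e₂) / 3 ≤ 1 ∧
    0 ≤ (p^2 * e₀ + p * e₁ + e₂) / (p^2 + p + 1) ∧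
    (p^2 * e₀ + p * e₁ + e₂) / (p^2 + p + 1) ≤ 1 ∧
    ((p^2 * e₀ + p * e₁ + e₂) / (p^2 + p + 1) = 0 → (e₀ + e₁ + e₂) / 3 = 0) ∧
    (1 - (p^2 * e₀ + p * e₁ + e₂) / (p^2 + p + 1) = 0 → 1 - (e₀ + e₁ + e₂) / 3 = 0) := by
  have hs0 : (0:ℝ) < p^2 + p + 1 := by positivity
  have hp2 : (0:ℝ) < p^2 := by positivity
  have m0 := mul_nonneg hp2.le h₀0
  have m1 := mul_nonneg hp0.le h₁0
  have m0' := mul_le_mul_of_nonneg_left h₀1 hp2.le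
  have m1' := mul_le_mul_of_nonneg_left h₁1 hp0.le
  refine ⟨div_nonneg (by linarith) (by norm_num), ?_,
    div_nonneg (by linarith) hs0.le, ?_, ?_, ?_⟩
  · rw [div_le_one (by norm_num : (0:ℝ) < 3)]; linarith
  · rw [div_le_one hs0]; linarith
  · intro h
    have h2 := (div_eq_zero_iff.mp h).resolve_right hs0.ne'
    have z0 : e₀ = 0 := le_antisymm (by nlinarith) h₀0
    have z1 : e₁ = 0 := le_antisymm (by nlinarith) h₁0
    have z2 : e₂ = 0 := le_antisymm (by nlinarith) h₂0
    rw [z0, z1, z2]; norm_num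
  · intro h
    have h2 : p^2 * e₀ + p * e₁ + e₂ = p^2 + p + 1 :=
      (div_eq_one_iff_eq hs0.ne').mp (sub_eq_zero.mp h).symm
    have z0 : e₀ = 1 := le_antisymm h₀1 (by nlinarith)
    have z1 : e₁ = 1 := le_antisymm h₁1 (by nlinarith)
    have z2 : e₂ = 1 := le_antisymm h₂1 (by nlinarith)
    rw [z0, z1, z2]; norm_num

set_option maxHeartbeats 1000000 in
lemma main_bound {α p : ℝ} (hα : 1 < α) (hp0 : 0 < p) (hp1 : p ≤ 1)
    (h2E : (2:ℝ) ^ α ≤ p ^ (1 - α)) {q₀ q₁ q₂ : ℝ}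
    (h₀0 : 0 ≤ q₀) (h₀1 : q₀ ≤ 1) (h₁0 : 0 ≤ q₁) (h₁1 : q₁ ≤ 1)
    (h₂0 : 0 ≤ q₂) (h₂1 : q₂ ≤ 1) :
    Fq α ((q₀ + q₁ + q₂) / 3) ((p^2 * q₀ + p * q₁ + q₂) / (p^2 + p + 1))
      + Fq α (1 - (q₀ + q₁ + q₂) / 3) (1 - (p^2 * q₀ + p * q₁ + q₂) / (p^2 + p + 1))
      ≤ (1/3 : ℝ) ^ α * (p^2 + p + 1) ^ (α - 1)
        * (p ^ (1 - α) * p ^ (1 - α) + p ^ (1 - α)) := by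
  have hs0 : (0:ℝ) < p^2 + p + 1 := by positivity
  have hsne : (p^2 + p + 1 : ℝ) ≠ 0 := hs0.ne'
  by_cases hall0 : q₀ = 0 ∧ q₁ = 0 ∧ q₂ = 0
  · obtain ⟨rfl, rfl, rfl⟩ := hall0
    exact corner_le hα hp0 hp1 h2E 0 0 0 (Or.inl rfl) (Or.inl rfl) (Or.inl rfl)
  by_cases hall1 : q₀ = 1 ∧ q₁ = 1 ∧ q₂ = 1
  · obtain ⟨rfl, rfl, rfl⟩ := hall1
    exact corner_le hα hp0 hp1 h2E 1 1 1 (Or.inr rfl) (Or.inr rfl) (Or.inr rfl)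
  -- main case : the second distribution is nondegenerate
  have hp2 : (0:ℝ) < p^2 := by positivity
  have hBpos : 0 < p^2 * q₀ + p * q₁ + q₂ := by
    by_contra hc
    push_neg at hc
    refine hall0 ⟨?_, ?_, ?_⟩ <;>
      [exact le_antisymm (by nlinarith) h₀0;
       exact le_antisymm (by nlinarith) h₁0;
       exact le_antisymm (by nlinarith) h₂0]
  have hBlt : p^2 * q₀ + p * q₁ + q₂ < p^2 + p + 1 := by
    rcases not_and_or.mp hall1 with h | h
    · have : q₀ < 1 := lt_of_le_of_ne h₀1 h
      nlinarith
    rcases not_and_or.mp h with h | h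
    · have : q₁ < 1 := lt_of_le_of_ne h₁1 h
      nlinarith
    · have : q₂ < 1 := lt_of_le_of_ne h₂1 h
      nlinarith
  set A := (q₀ + q₁ + q₂) / 3 with hA
  set B := (p^2 * q₀ + p * q₁ + q₂) / (p^2 + p + 1) with hB
  have hA0 : 0 ≤ A := by rw [hA]; exact div_nonneg (by linarith) (by norm_num)
  have hA1 : A ≤ 1 := by rw [hA]; linarith
  have hB0 : 0 < B := div_pos hBpos hs0
  have hB1 : B < 1 := (div_lt_one hs0).mpr hBlt
  clear_value A B
  have heq1 : Fq α A B = α * (A/B) ^ (α - 1) * A - (α - 1) * (A/B) ^ α * B :=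
    (young_eq hα hA0 hB0).symm
  have heq2 : Fq α (1-A) (1-B) = α * ((1-A)/(1-B)) ^ (α - 1) * (1-A)
      - (α - 1) * ((1-A)/(1-B)) ^ α * (1-B) :=
    (young_eq hα (by linarith) (by linarith)).symm
  set c := A / B with hc
  set d := (1 - A) / (1 - B) with hd
  have hc0 : 0 ≤ c := div_nonneg hA0 hB0.le
  have hd0 : 0 ≤ d := div_nonneg (by linarith) (by linarith)
  clear_value c d
  set l₀ : ℝ := (α * c ^ (α-1) - α * d ^ (α-1)) / 3
      - ((α-1) * c ^ α - (α-1) * d ^ α) * (p^2 / (p^2+p+1)) with hl₀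
  set l₁ : ℝ := (α * c ^ (α-1) - α * d ^ (α-1)) / 3
      - ((α-1) * c ^ α - (α-1) * d ^ α) * (p / (p^2+p+1)) with hl₁
  set l₂ : ℝ := (α * c ^ (α-1) - α * d ^ (α-1)) / 3
      - ((α-1) * c ^ α - (α-1) * d ^ α) * (1 / (p^2+p+1)) with hl₂
  clear_value l₀ l₁ l₂
  set e₀ : ℝ := if 0 ≤ l₀ then 1 else 0 with he₀def
  set e₁ : ℝ := if 0 ≤ l₁ then 1 else 0 with he₁def
  set e₂ : ℝ := if 0 ≤ l₂ then 1 else 0 with he₂def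
  clear_value e₀ e₁ e₂
  have he₀ : e₀ = 0 ∨ e₀ = 1 := by rw [he₀def]; split <;> simp
  have he₁ : e₁ = 0 ∨ e₁ = 1 := by rw [he₁def]; split <;> simp
  have he₂ : e₂ = 0 ∨ e₂ = 1 := by rw [he₂def]; split <;> simp
  have hmax : ∀ l q e : ℝ, 0 ≤ q → q ≤ 1 → e = (if 0 ≤ l then (1:ℝ) else 0) →
      l * q ≤ l * e := by
    intro l q e hq0 hq1 he
    rcases le_or_gt 0 l with hl | hl
    · rw [he, if_pos hl]
      simpa using mul_le_mul_of_nonneg_left hq1 hl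
    · rw [he, if_neg (not_le.mpr hl), mul_zero]
      exact mul_nonpos_of_nonpos_of_nonneg hl.le hq0
  have he₀01 : 0 ≤ e₀ ∧ e₀ ≤ 1 := by rcases he₀ with h | h <;> rw [h] <;> norm_num
  have he₁01 : 0 ≤ e₁ ∧ e₁ ≤ 1 := by rcases he₁ with h | h <;> rw [h] <;> norm_num
  have he₂01 : 0 ≤ e₂ ∧ e₂ ≤ 1 := by rcases he₂ with h | h <;> rw [h] <;> norm_num
  obtain ⟨hA'0, hA'1, hB'0, hB'1, hB'zero, hB'one⟩ := cube_facts hp0 he₀01.1 he₀01.2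
    he₁01.1 he₁01.2 he₂01.1 he₂01.2
  set A' := (e₀ + e₁ + e₂) / 3 with hA'
  set B' := (p^2 * e₀ + p * e₁ + e₂) / (p^2 + p + 1) with hB'
  have hy1 : α * c ^ (α - 1) * A' - (α - 1) * c ^ α * B' ≤ Fq α A' B' :=
    young hα hc0 hA'0 hB'0 hB'zero
  have hy2 : α * d ^ (α - 1) * (1 - A') - (α - 1) * d ^ α * (1 - B')
      ≤ Fq α (1 - A') (1 - B') :=
    young hα hd0 (by linarith) (by linarith) hB'one
  have hlin : ∀ x y z : ℝ,
      α * c ^ (α-1) * ((x + y + z) / 3)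
        - (α-1) * c ^ α * ((p^2 * x + p * y + z) / (p^2+p+1))
      + (α * d ^ (α-1) * (1 - (x + y + z) / 3)
        - (α-1) * d ^ α * (1 - (p^2 * x + p * y + z) / (p^2+p+1)))
      = (α * d ^ (α-1) - (α-1) * d ^ α) + (l₀ * x + l₁ * y + l₂ * z) := by
    intro x y z
    rw [hl₀, hl₁, hl₂]
    field_simp
    ring
  calc Fq α A B + Fq α (1-A) (1-B)
      = (α * d ^ (α-1) - (α-1) * d ^ α) + (l₀ * q₀ + l₁ * q₁ + l₂ * q₂) := by
        rw [heq1, heq2, hA, hB]; exact hlin q₀ q₁ q₂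
    _ ≤ (α * d ^ (α-1) - (α-1) * d ^ α) + (l₀ * e₀ + l₁ * e₁ + l₂ * e₂) := by
        have m0 := hmax l₀ q₀ e₀ h₀0 h₀1 he₀def
        have m1 := hmax l₁ q₁ e₁ h₁0 h₁1 he₁def
        have m2 := hmax l₂ q₂ e₂ h₂0 h₂1 he₂def
        linarith
    _ = α * c ^ (α - 1) * A' - (α - 1) * c ^ α * B'
        + (α * d ^ (α - 1) * (1 - A') - (α - 1) * d ^ α * (1 - B')) := by
        rw [hA', hB']; exact (hlin e₀ e₁ e₂).symm
    _ ≤ Fq α A' B' + Fq α (1 - A') (1 - B') := add_le_add hy1 hy2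
    _ ≤ _ := by
        rw [hA', hB']
        exact corner_le hα hp0 hp1 h2E e₀ e₁ e₂ he₀ he₁ he₂

set_option maxHeartbeats 1000000 in
/-- On the three-point counterexample, the `2`-cut of the Rényi divergence of order `α`
is strictly (and quantifiably) smaller than the Rényi divergence itself; in particular
Rényi divergence is not `2`-generated. -/
theorem renyi_two_cut_gap (α β : ℝ) (hα : 1 < α) (hβ : α + 1 < β)
    (p : ℝ) (hp : p = (1 / 2 : ℝ) ^ (β / (α - 1)))
    (μ₁ μ₂ : PMF (Fin 3))
    (hμ₁ : ∀ i, μ₁ i = ENNReal.ofReal (1 / 3))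
    (hμ₂a : μ₂ 0 = ENNReal.ofReal (p ^ 2 / (p ^ 2 + p + 1)))
    (hμ₂b : μ₂ 1 = ENNReal.ofReal (p / (p ^ 2 + p + 1)))
    (hμ₂c : μ₂ 2 = ENNReal.ofReal (1 / (p ^ 2 + p + 1))) :
    (⨆ γ : Fin 3 → PMF Decision, renyi α Decision (μ₁.bind γ) (μ₂.bind γ)) +
        (α - 1)⁻¹ *
          Real.log (min (((2:ℝ) ^ β + (2:ℝ) ^ (-β) + 1) / (2:ℝ) ^ (α + 1))
            (((2:ℝ) ^ β + (2:ℝ) ^ (-β) + 1) / ((2:ℝ) ^ β + 1)))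
      ≤ renyi α (Fin 3) μ₁ μ₂ ∧
    0 < (α - 1)⁻¹ *
          Real.log (min (((2:ℝ) ^ β + (2:ℝ) ^ (-β) + 1) / (2:ℝ) ^ (α + 1))
            (((2:ℝ) ^ β + (2:ℝ) ^ (-β) + 1) / ((2:ℝ) ^ β + 1))) ∧
    (⨆ γ : Fin 3 → PMF Decision, renyi α Decision (μ₁.bind γ) (μ₂.bind γ)) <
      renyi α (Fin 3) μ₁ μ₂ := by
  have hα1 : (0:ℝ) < α - 1 := by linarith
  have hβ0 : (0:ℝ) < β := by linarith
  have hp0 : 0 < p := by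
    rw [hp]; exact Real.rpow_pos_of_pos (by norm_num) _
  have hp1 : p ≤ 1 := by
    rw [hp]
    exact Real.rpow_le_one (by norm_num) (by norm_num) (div_nonneg hβ0.le hα1.le)
  have hs0 : (0:ℝ) < p^2 + p + 1 := by positivity
  have hE : p ^ (1 - α) = (2:ℝ) ^ β := by
    rw [hp, ← Real.rpow_mul (by norm_num : (0:ℝ) ≤ 1/2),
      show β / (α - 1) * (1 - α) = -β from by field_simp; ring,
      one_div, Real.inv_rpow (by norm_num : (0:ℝ) ≤ 2),
      Real.rpow_neg (by norm_num : (0:ℝ) ≤ 2), inv_inv]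
  have h2E : (2:ℝ) ^ α ≤ p ^ (1 - α) := by
    rw [hE]; exact Real.rpow_le_rpow_of_exponent_le one_le_two (by linarith)
  have hE0 : (0:ℝ) < (2:ℝ) ^ β := Real.rpow_pos_of_pos (by norm_num) β
  have hE1 : (1:ℝ) < (2:ℝ) ^ β := Real.one_lt_rpow (by norm_num) hβ0
  have hK0 : (0:ℝ) < (1/3 : ℝ) ^ α * (p^2 + p + 1) ^ (α - 1) :=
    mul_pos (Real.rpow_pos_of_pos (by norm_num) α) (Real.rpow_pos_of_pos hs0 _)
  have hp2E : (p^2 : ℝ) ^ (1-α) = p ^ (1-α) * p ^ (1-α) := by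
    rw [pow_two, Real.mul_rpow hp0.le hp0.le]
  have e13 : (ENNReal.ofReal (1/3 : ℝ)).toReal = 1/3 :=
    ENNReal.toReal_ofReal (by norm_num)
  have ea : (ENNReal.ofReal (p^2 / (p^2+p+1))).toReal = p^2 / (p^2+p+1) :=
    ENNReal.toReal_ofReal (by positivity)
  have eb : (ENNReal.ofReal (p / (p^2+p+1))).toReal = p / (p^2+p+1) :=
    ENNReal.toReal_ofReal (by positivity)
  have ec : (ENNReal.ofReal (1 / (p^2+p+1))).toReal = 1 / (p^2+p+1) :=
    ENNReal.toReal_ofReal (by positivity)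
  -- value of the full Rényi sum
  have hRsum : (∑' x : Fin 3, (μ₂ x).toReal * ((μ₁ x).toReal / (μ₂ x).toReal) ^ α)
      = (1/3 : ℝ)^α * (p^2+p+1)^(α-1)
        * ((2:ℝ)^β * (2:ℝ)^β + (2:ℝ)^β + 1) := by
    rw [tsum_fintype, Fin.sum_univ_three, hμ₁ 0, hμ₁ 1, hμ₁ 2, hμ₂a, hμ₂b, hμ₂c,
      e13, ea, eb, ec]
    change Fq α (1/3) (p^2 / (p^2+p+1)) + Fq α (1/3) (p / (p^2+p+1))
      + Fq α (1/3) (1 / (p^2+p+1)) = _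
    rw [Fq_div_eq hα hs0 zero_le_one (by positivity),
      Fq_div_eq hα hs0 zero_le_one hp0.le,
      Fq_div_eq hα hs0 zero_le_one zero_le_one,
      Real.one_rpow, Real.one_rpow, hp2E, hE]
    ring
  -- per-γ bound
  have key : ∀ γ : Fin 3 → PMF Decision,
      renyi α Decision (μ₁.bind γ) (μ₂.bind γ)
        ≤ (α-1)⁻¹ * Real.log ((1/3 : ℝ)^α * (p^2+p+1)^(α-1)
            * ((2:ℝ)^β * (2:ℝ)^β + (2:ℝ)^β)) := by
    intro γ
    have hone : ∀ i : Fin 3,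
        (γ i Decision.Acc).toReal + (γ i Decision.Rej).toReal = 1 := by
      intro i
      have h := (γ i).tsum_coe
      rw [decision_tsum] at h
      have h2 := congrArg ENNReal.toReal h
      rwa [ENNReal.toReal_add (PMF.apply_ne_top _ _) (PMF.apply_ne_top _ _),
        ENNReal.toReal_one] at h2
    have hr : ∀ i : Fin 3,
        (γ i Decision.Rej).toReal = 1 - (γ i Decision.Acc).toReal := by
      intro i; have := hone i; linarith
    have hbind : ∀ (μ : PMF (Fin 3)) (d : Decision),
        ((μ.bind γ) d).toReal
          = (μ 0).toReal * (γ 0 d).toReal + (μ 1).toReal * (γ 1 d).toReal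
            + (μ 2).toReal * (γ 2 d).toReal := by
      intro μ d
      have hnt : ∀ i : Fin 3, μ i * γ i d ≠ ⊤ :=
        fun i => ENNReal.mul_ne_top (PMF.apply_ne_top _ _) (PMF.apply_ne_top _ _)
      rw [PMF.bind_apply, tsum_fintype, Fin.sum_univ_three,
        ENNReal.toReal_add (ENNReal.add_ne_top.mpr ⟨hnt 0, hnt 1⟩) (hnt 2),
        ENNReal.toReal_add (hnt 0) (hnt 1),
        ENNReal.toReal_mul, ENNReal.toReal_mul, ENNReal.toReal_mul]
    have hq00 : 0 ≤ (γ 0 Decision.Acc).toReal := ENNReal.toReal_nonneg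
    have hq10 : 0 ≤ (γ 1 Decision.Acc).toReal := ENNReal.toReal_nonneg
    have hq20 : 0 ≤ (γ 2 Decision.Acc).toReal := ENNReal.toReal_nonneg
    have hle1 : ∀ i : Fin 3, (γ i Decision.Acc).toReal ≤ 1 := by
      intro i
      have h := ENNReal.toReal_mono ENNReal.one_ne_top (PMF.coe_le_one (γ i) Decision.Acc)
      simpa using h
    have hq01 := hle1 0
    have hq11 := hle1 1
    have hq21 := hle1 2
    have hb1A : ((μ₁.bind γ) Decision.Acc).toReal
        = ((γ 0 Decision.Acc).toReal + (γ 1 Decision.Acc).toReal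
            + (γ 2 Decision.Acc).toReal) / 3 := by
      rw [hbind μ₁ Decision.Acc, hμ₁ 0, hμ₁ 1, hμ₁ 2, e13]; ring
    have hb1R : ((μ₁.bind γ) Decision.Rej).toReal
        = 1 - ((γ 0 Decision.Acc).toReal + (γ 1 Decision.Acc).toReal
            + (γ 2 Decision.Acc).toReal) / 3 := by
      rw [hbind μ₁ Decision.Rej, hμ₁ 0, hμ₁ 1, hμ₁ 2, e13, hr 0, hr 1, hr 2]; ring
    have hb2A : ((μ₂.bind γ) Decision.Acc).toReal
        = (p^2 * (γ 0 Decision.Acc).toReal + p * (γ 1 Decision.Acc).toReal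
            + (γ 2 Decision.Acc).toReal) / (p^2+p+1) := by
      rw [hbind μ₂ Decision.Acc, hμ₂a, hμ₂b, hμ₂c, ea, eb, ec]
      field_simp
    have hb2R : ((μ₂.bind γ) Decision.Rej).toReal
        = 1 - (p^2 * (γ 0 Decision.Acc).toReal + p * (γ 1 Decision.Acc).toReal
            + (γ 2 Decision.Acc).toReal) / (p^2+p+1) := by
      rw [hbind μ₂ Decision.Rej, hμ₂a, hμ₂b, hμ₂c, ea, eb, ec, hr 0, hr 1, hr 2]
      field_simp
      ring
    set q₀ := (γ 0 Decision.Acc).toReal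
    set q₁ := (γ 1 Decision.Acc).toReal
    set q₂ := (γ 2 Decision.Acc).toReal
    clear_value q₀ q₁ q₂
    rw [renyi, decision_tsum, hb1A, hb1R, hb2A, hb2R]
    have hFq : ∀ x y : ℝ, y * (x / y) ^ α = Fq α x y := fun _ _ => rfl
    rw [hFq, hFq]
    have hGle := main_bound hα hp0 hp1 h2E hq00 hq01 hq10 hq11 hq20 hq21
    rw [hE] at hGle
    have hGpos : 0 < Fq α ((q₀ + q₁ + q₂) / 3) ((p^2*q₀ + p*q₁ + q₂) / (p^2+p+1))
        + Fq α (1 - (q₀ + q₁ + q₂) / 3) (1 - (p^2*q₀ + p*q₁ + q₂) / (p^2+p+1)) := by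
      by_cases hz : q₀ = 0 ∧ q₁ = 0 ∧ q₂ = 0
      · obtain ⟨rfl, rfl, rfl⟩ := hz
        norm_num [Fq_zero_right, Fq_one_one]
      · have hqpos : 0 < q₀ + q₁ + q₂ := by
          rcases not_and_or.mp hz with h | h
          · have : q₀ ≠ 0 := h
            have : 0 < q₀ := lt_of_le_of_ne hq00 (Ne.symm this)
            linarith
          rcases not_and_or.mp h with h | h
          · have : 0 < q₁ := lt_of_le_of_ne hq10 (Ne.symm h)
            linarith
          · have : 0 < q₂ := lt_of_le_of_ne hq20 (Ne.symm h)
            linarith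
        have hBpos : 0 < p^2*q₀ + p*q₁ + q₂ := by
          rcases not_and_or.mp hz with h | h
          · have : 0 < q₀ := lt_of_le_of_ne hq00 (Ne.symm h)
            nlinarith [mul_nonneg hp0.le hq10, mul_pos (mul_pos hp0 hp0) this]
          rcases not_and_or.mp h with h | h
          · have : 0 < q₁ := lt_of_le_of_ne hq10 (Ne.symm h)
            nlinarith [mul_nonneg (mul_nonneg hp0.le hp0.le) hq00, mul_pos hp0 this]
          · have : 0 < q₂ := lt_of_le_of_ne hq20 (Ne.symm h)
            nlinarith [mul_nonneg (mul_nonneg hp0.le hp0.le) hq00,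
              mul_nonneg hp0.le hq10]
        have hBle : (p^2*q₀ + p*q₁ + q₂) / (p^2+p+1) ≤ 1 := by
          rw [div_le_one hs0]
          nlinarith [mul_le_mul_of_nonneg_left hq01 (by positivity : (0:ℝ) ≤ p^2),
            mul_le_mul_of_nonneg_left hq11 hp0.le]
        have hAle : (q₀ + q₁ + q₂) / 3 ≤ 1 := by
          rw [div_le_one (by norm_num : (0:ℝ) < 3)]; linarith
        exact add_pos_of_pos_of_nonneg
          (Fq_pos (by positivity) (div_pos hBpos hs0))
          (Fq_nonneg (by linarith) (by linarith))
    refine mul_le_mul_of_nonneg_left ?_ (by positivity)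
    exact Real.log_le_log hGpos hGle
  haveI : Nonempty (Fin 3 → PMF Decision) := ⟨fun _ => PMF.pure Decision.Acc⟩
  have hEm : (2:ℝ)^(-β) = ((2:ℝ)^β)⁻¹ := Real.rpow_neg (by norm_num) β
  have hSpos : (0:ℝ) < (2:ℝ)^β + (2:ℝ)^(-β) + 1 := by positivity
  have hden1 : (0:ℝ) < (2:ℝ)^β + 1 := by linarith
  have hminval : min (((2:ℝ)^β + (2:ℝ)^(-β) + 1) / (2:ℝ)^(α+1))
      (((2:ℝ)^β + (2:ℝ)^(-β) + 1) / ((2:ℝ)^β + 1))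
      = ((2:ℝ)^β + (2:ℝ)^(-β) + 1) / ((2:ℝ)^β + 1) := by
    apply min_eq_right
    apply div_le_div_of_nonneg_left hSpos.le (Real.rpow_pos_of_pos (by norm_num) (α+1))
    have h := Real.rpow_le_rpow_of_exponent_le (one_le_two) hβ.le
    linarith
  have hm1 : 1 < ((2:ℝ)^β + (2:ℝ)^(-β) + 1) / ((2:ℝ)^β + 1) := by
    rw [one_lt_div hden1]
    have := Real.rpow_pos_of_pos (by norm_num : (0:ℝ) < 2) (-β)
    linarith
  have part2 : 0 < (α - 1)⁻¹ *
      Real.log (min (((2:ℝ) ^ β + (2:ℝ) ^ (-β) + 1) / (2:ℝ) ^ (α + 1))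
        (((2:ℝ) ^ β + (2:ℝ) ^ (-β) + 1) / ((2:ℝ) ^ β + 1))) := by
    rw [hminval]
    exact mul_pos (inv_pos.mpr hα1) (Real.log_pos hm1)
  have hXpos : (0:ℝ) < (1/3 : ℝ)^α * (p^2+p+1)^(α-1)
      * ((2:ℝ)^β * (2:ℝ)^β + (2:ℝ)^β + 1) :=
    mul_pos hK0 (by nlinarith)
  have hMpos : (0:ℝ) < (1/3 : ℝ)^α * (p^2+p+1)^(α-1)
      * ((2:ℝ)^β * (2:ℝ)^β + (2:ℝ)^β) :=
    mul_pos hK0 (by nlinarith)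
  have hmeq : (1/3 : ℝ)^α * (p^2+p+1)^(α-1) * ((2:ℝ)^β * (2:ℝ)^β + (2:ℝ)^β)
      = ((1/3 : ℝ)^α * (p^2+p+1)^(α-1) * ((2:ℝ)^β * (2:ℝ)^β + (2:ℝ)^β + 1))
        / (((2:ℝ)^β + (2:ℝ)^(-β) + 1) / ((2:ℝ)^β + 1)) := by
    rw [eq_div_iff (div_pos hSpos hden1).ne', hEm]
    field_simp
    ring
  have hlog : Real.log ((1/3 : ℝ)^α * (p^2+p+1)^(α-1)
        * ((2:ℝ)^β * (2:ℝ)^β + (2:ℝ)^β))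
      = Real.log ((1/3 : ℝ)^α * (p^2+p+1)^(α-1)
          * ((2:ℝ)^β * (2:ℝ)^β + (2:ℝ)^β + 1))
        - Real.log (((2:ℝ)^β + (2:ℝ)^(-β) + 1) / ((2:ℝ)^β + 1)) := by
    rw [hmeq, Real.log_div hXpos.ne' (div_pos hSpos hden1).ne']
  have hsup : (⨆ γ : Fin 3 → PMF Decision, renyi α Decision (μ₁.bind γ) (μ₂.bind γ))
      ≤ (α-1)⁻¹ * Real.log ((1/3 : ℝ)^α * (p^2+p+1)^(α-1)
          * ((2:ℝ)^β * (2:ℝ)^β + (2:ℝ)^β)) := ciSup_le key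
  have hR : renyi α (Fin 3) μ₁ μ₂ = (α-1)⁻¹ * Real.log ((1/3 : ℝ)^α
      * (p^2+p+1)^(α-1) * ((2:ℝ)^β * (2:ℝ)^β + (2:ℝ)^β + 1)) := by
    rw [renyi, hRsum]
  have part1 : (⨆ γ : Fin 3 → PMF Decision, renyi α Decision (μ₁.bind γ) (μ₂.bind γ)) +
      (α - 1)⁻¹ *
        Real.log (min (((2:ℝ) ^ β + (2:ℝ) ^ (-β) + 1) / (2:ℝ) ^ (α + 1))
          (((2:ℝ) ^ β + (2:ℝ) ^ (-β) + 1) / ((2:ℝ) ^ β + 1)))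
      ≤ renyi α (Fin 3) μ₁ μ₂ := by
    rw [hR, hminval]
    have heq2 : (α-1)⁻¹ * Real.log ((1/3 : ℝ)^α * (p^2+p+1)^(α-1)
          * ((2:ℝ)^β * (2:ℝ)^β + (2:ℝ)^β))
        = (α-1)⁻¹ * Real.log ((1/3 : ℝ)^α * (p^2+p+1)^(α-1)
            * ((2:ℝ)^β * (2:ℝ)^β + (2:ℝ)^β + 1))
          - (α-1)⁻¹ * Real.log (((2:ℝ)^β + (2:ℝ)^(-β) + 1) / ((2:ℝ)^β + 1)) := by
      rw [hlog]; ring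
    linarith [hsup]
  exact ⟨part1, part2, by linarith [part1, part2]⟩
end

section
/- Let f : [0,∞) → ℝ be a strictly convex weight function with lim_{t→0+} t·f(0/t) = 0, and let Δ^f be the associated f-divergence. Then for every finite k ≥ 1, Δ^f is not k-generated: there exists a type X and μ₁, μ₂ ∈ PMF(X) such that the k-cut satisfies Δ̄^f{}ᵏ_X(μ₁‖μ₂) < Δ^f_X(μ₁‖μ₂). In particular, one may take X = {0,1,…,k} and any μ₁, μ₂ with full support on X whose likelihood ratios μ₁(i)/μ₂(i) are pairwise distinct. -/
/-!
Let `γ : X → PMF W` with `|W| < |X|`. Each `γ x` gives mass at least `1 / |W|` to some output,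
so by pigeonhole two inputs `i₀ ≠ i₁` share such an output `w`; weighted by `μ₂`, both contribute
at least `c = min μ₂ / |W|` to `w`. The term of `Δ(γμ₁‖γμ₂)` at `w` is Jensen's inequality in
perspective form for the likelihood ratios `r = μ₁ / μ₂`, and there it loses at least
`c · (f (r i₀) + f (r i₁) - 2 f ((r i₀ + r i₁) / 2))`, which is positive by strict convexity
since the ratios are distinct. The loss is bounded below uniformly in `γ`, so the supremum
over `γ` stays strictly below `Δ(μ₁‖μ₂)`.
-/

open scoped ENNReal

noncomputable def fDiv (f : ℝ → ℝ) (X : Type) (μ₁ μ₂ : PMF X) : ℝ :=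
  ∑' x, (μ₂ x).toReal * f ((μ₁ x).toReal / (μ₂ x).toReal)

open Set

noncomputable def midpointGap (f : ℝ → ℝ) (x y : ℝ) : ℝ := f x + f y - 2 * f ((x + y) / 2)

theorem StrictConvexOn.midpointGap_pos {s : Set ℝ} {f : ℝ → ℝ} (hf : StrictConvexOn ℝ s f)
    {x y : ℝ} (hx : x ∈ s) (hy : y ∈ s) (hxy : x ≠ y) : 0 < midpointGap f x y := by
  have h := hf.2 hx hy hxy (by norm_num : (0 : ℝ) < 1 / 2)
    (by norm_num : (0 : ℝ) < 1 / 2) (by norm_num)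
  simp only [smul_eq_mul] at h
  rw [show 1 / 2 * x + 1 / 2 * y = (x + y) / 2 by ring] at h
  unfold midpointGap
  linarith

section Perspective

variable {ι : Type*} [Fintype ι] {f : ℝ → ℝ} {a r : ι → ℝ}

theorem ConvexOn.perspective_le (hf : ConvexOn ℝ (Ici 0) f) (ha : 0 ≤ a) (hr : 0 ≤ r) :
    (∑ i, a i) * f ((∑ i, a i * r i) / ∑ i, a i) ≤ ∑ i, a i * f (r i) := by
  rcases (Fintype.sum_nonneg ha).eq_or_lt with hzero | hpos
  · simp [(Fintype.sum_eq_zero_iff_of_nonneg ha).1 hzero.symm]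
  · have h := hf.map_centerMass_le (t := Finset.univ) (fun i _ => ha i) hpos fun i _ => hr i
    simp only [Finset.centerMass, smul_eq_mul, Function.comp_apply, inv_mul_eq_div] at h
    rwa [le_div_iff₀ hpos, mul_comm] at h

theorem ConvexOn.perspective_add_mul_midpointGap_le (hf : ConvexOn ℝ (Ici 0) f) (ha : 0 ≤ a)
    (hr : 0 ≤ r) {i₀ i₁ : ι} (hne : i₀ ≠ i₁) {c : ℝ} (hc : 0 ≤ c) (h₀ : c ≤ a i₀) (h₁ : c ≤ a i₁) :
    (∑ i, a i) * f ((∑ i, a i * r i) / ∑ i, a i) + c * midpointGap f (r i₀) (r i₁) ≤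
      ∑ i, a i * f (r i) := by
  classical
  -- Move mass `c` from each of `r i₀`, `r i₁` onto their midpoint, then apply plain Jensen.
  set b : ι → ℝ := a - Pi.single i₀ c - Pi.single i₁ c
  have hb : ∀ g : ι → ℝ, ∑ i, b i * g i = ∑ i, a i * g i - c * g i₀ - c * g i₁ := by
    intro g
    simp [b, sub_mul, Finset.sum_sub_distrib, Pi.single_apply]
  set a' : Option ι → ℝ := fun o => o.elim (2 * c) b
  set r' : Option ι → ℝ := fun o => o.elim ((r i₀ + r i₁) / 2) r
  have ha' : 0 ≤ a' := by
    rintro (_ | i)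
    · exact mul_nonneg zero_le_two hc
    · have := ha i
      simp only [a', Option.elim, b, Pi.sub_apply, Pi.single_apply]
      split_ifs <;> simp_all
  have hr' : 0 ≤ r' := by
    rintro (_ | i)
    · exact div_nonneg (add_nonneg (hr i₀) (hr i₁)) zero_le_two
    · exact hr i
  have h := hf.perspective_le ha' hr'
  simp only [Fintype.sum_option, a', r', Option.elim] at h
  have hmass := hb fun _ => 1
  simp only [mul_one] at hmass
  rw [hmass, hb r, hb fun i => f (r i), show 2 * c + (∑ i, a i - c - c) = ∑ i, a i by ring,
    show 2 * c * ((r i₀ + r i₁) / 2) + (∑ i, a i * r i - c * r i₀ - c * r i₁) =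
      ∑ i, a i * r i by ring] at h
  unfold midpointGap
  linarith

end Perspective

section PMF

variable {X W : Type} [Fintype X]

theorem fDiv_eq_sum (f : ℝ → ℝ) (μ₁ μ₂ : PMF X) :
    fDiv f X μ₁ μ₂ = ∑ x, (μ₂ x).toReal * f ((μ₁ x).toReal / (μ₂ x).toReal) :=
  tsum_fintype _

theorem PMF.sum_toReal (μ : PMF X) : ∑ x, (μ x).toReal = 1 := by
  rw [← ENNReal.toReal_sum fun x _ => μ.apply_ne_top x, ← tsum_fintype (L := .unconditional _),
    μ.tsum_coe, ENNReal.toReal_one]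

theorem PMF.toReal_bind_apply (μ : PMF X) (γ : X → PMF W) (w : W) :
    (μ.bind γ w).toReal = ∑ x, (μ x).toReal * (γ x w).toReal := by
  rw [PMF.bind_apply, tsum_fintype,
    ENNReal.toReal_sum fun x _ => ENNReal.mul_ne_top (μ.apply_ne_top x) ((γ x).apply_ne_top w)]
  simp only [ENNReal.toReal_mul]

theorem PMF.exists_inv_card_le_toReal [Fintype W] (μ : PMF W) :
    ∃ w, (Fintype.card W : ℝ)⁻¹ ≤ (μ w).toReal := by
  have : Nonempty W := μ.support_nonempty.to_type
  refine (Finset.exists_le_of_sum_le Finset.univ_nonempty ?_).imp fun w ⟨_, h⟩ => h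
  simp [PMF.sum_toReal]

theorem PMF.exists_ne_inv_card_le_toReal [Fintype W] (γ : X → PMF W)
    (hcard : Fintype.card W < Fintype.card X) :
    ∃ i₀ i₁ w, i₀ ≠ i₁ ∧ (Fintype.card W : ℝ)⁻¹ ≤ (γ i₀ w).toReal ∧
      (Fintype.card W : ℝ)⁻¹ ≤ (γ i₁ w).toReal := by
  choose w hw using fun x => (γ x).exists_inv_card_le_toReal
  obtain ⟨i₀, i₁, hne, heq⟩ := Fintype.exists_ne_map_eq_of_card_lt w hcard
  exact ⟨i₀, i₁, w i₀, hne, hw i₀, heq ▸ hw i₁⟩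

end PMF

section DataProcessing

variable {X W : Type} [Fintype X] [Fintype W] {f : ℝ → ℝ} {μ₁ μ₂ : PMF X}

theorem fDiv_bind_add_mul_midpointGap_le (hf : ConvexOn ℝ (Ici 0) f) (hμ₂ : ∀ x, μ₂ x ≠ 0)
    (γ : X → PMF W) {i₀ i₁ : X} (hne : i₀ ≠ i₁) {w₀ : W} {c : ℝ} (hc : 0 ≤ c)
    (h₀ : c ≤ (μ₂ i₀).toReal * (γ i₀ w₀).toReal) (h₁ : c ≤ (μ₂ i₁).toReal * (γ i₁ w₀).toReal) :
    fDiv f W (μ₁.bind γ) (μ₂.bind γ) +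
        c * midpointGap f ((μ₁ i₀).toReal / (μ₂ i₀).toReal) ((μ₁ i₁).toReal / (μ₂ i₁).toReal) ≤
      fDiv f X μ₁ μ₂ := by
  classical
  set r : X → ℝ := fun x => (μ₁ x).toReal / (μ₂ x).toReal
  have hr : 0 ≤ r := fun x => div_nonneg ENNReal.toReal_nonneg ENNReal.toReal_nonneg
  have hq : ∀ x, (μ₂ x).toReal ≠ 0 := fun x => ENNReal.toReal_ne_zero.2 ⟨hμ₂ x, μ₂.apply_ne_top x⟩
  -- Jensen at every output `w`, with the midpoint gap collected only at `w₀`.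
  have hjensen : ∀ w, (μ₂.bind γ w).toReal * f ((μ₁.bind γ w).toReal / (μ₂.bind γ w).toReal) +
      (if w = w₀ then c else 0) * midpointGap f (r i₀) (r i₁) ≤
        ∑ x, (μ₂ x).toReal * (γ x w).toReal * f (r x) := by
    intro w
    have hmean : ∑ x, (μ₂ x).toReal * (γ x w).toReal * r x = (μ₁.bind γ w).toReal := by
      rw [PMF.toReal_bind_apply]
      refine Finset.sum_congr rfl fun x _ => ?_
      simp only [r]
      field_simp [hq x]
    rw [PMF.toReal_bind_apply μ₂, ← hmean]
    refine hf.perspective_add_mul_midpointGap_le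
      (fun x => mul_nonneg ENNReal.toReal_nonneg ENNReal.toReal_nonneg) hr hne ?_ ?_ ?_ <;>
      split_ifs with hw <;> first | (subst hw; assumption) | positivity
  calc fDiv f W (μ₁.bind γ) (μ₂.bind γ) + c * midpointGap f (r i₀) (r i₁)
      = ∑ w, ((μ₂.bind γ w).toReal * f ((μ₁.bind γ w).toReal / (μ₂.bind γ w).toReal) +
          (if w = w₀ then c else 0) * midpointGap f (r i₀) (r i₁)) := by
        simp [fDiv_eq_sum, Finset.sum_add_distrib]
    _ ≤ ∑ w, ∑ x, (μ₂ x).toReal * (γ x w).toReal * f (r x) :=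
        Finset.sum_le_sum fun w _ => hjensen w
    _ = fDiv f X μ₁ μ₂ := by
        rw [Finset.sum_comm, fDiv_eq_sum]
        refine Finset.sum_congr rfl fun x _ => ?_
        rw [← Finset.sum_mul, ← Finset.mul_sum, PMF.sum_toReal, mul_one]

end DataProcessing

theorem Finite.exists_pos_forall_le {ι : Type*} [Finite ι] {g : ι → ℝ} (hg : ∀ i, 0 < g i) :
    ∃ δ > 0, ∀ i, δ ≤ g i := by
  cases isEmpty_or_nonempty ι
  · exact ⟨1, one_pos, isEmptyElim⟩
  · obtain ⟨i₀, hi₀⟩ := Finite.exists_min g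
    exact ⟨g i₀, hg i₀, hi₀⟩

section Cut

variable {X W : Type} [Fintype X] [Fintype W] {f : ℝ → ℝ} {μ₁ μ₂ : PMF X}

theorem exists_pos_forall_fDiv_bind_add_le [Nonempty W] (hf : StrictConvexOn ℝ (Ici 0) f)
    (hμ₂ : ∀ x, μ₂ x ≠ 0)
    (hratio : ∀ i j, i ≠ j → (μ₁ i).toReal / (μ₂ i).toReal ≠ (μ₁ j).toReal / (μ₂ j).toReal)
    (hcard : Fintype.card W < Fintype.card X) :
    ∃ ε > 0, ∀ γ : X → PMF W, fDiv f W (μ₁.bind γ) (μ₂.bind γ) + ε ≤ fDiv f X μ₁ μ₂ := by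
  classical
  set r : X → ℝ := fun x => (μ₁ x).toReal / (μ₂ x).toReal
  have hr : ∀ x, r x ∈ Ici 0 := fun x => div_nonneg ENNReal.toReal_nonneg ENNReal.toReal_nonneg
  obtain ⟨δ, hδ, hδq⟩ := Finite.exists_pos_forall_le fun x =>
    ENNReal.toReal_pos (hμ₂ x) (μ₂.apply_ne_top x)
  obtain ⟨D, hD, hDgap⟩ := Finite.exists_pos_forall_le fun p : {p : X × X // p.1 ≠ p.2} =>
    hf.midpointGap_pos (hr p.1.1) (hr p.1.2) (hratio _ _ p.2)
  have hW : (0 : ℝ) < (Fintype.card W : ℝ)⁻¹ := by simp [Fintype.card_pos]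
  refine ⟨δ * (Fintype.card W : ℝ)⁻¹ * D, by positivity, fun γ => ?_⟩
  obtain ⟨i₀, i₁, w, hne, h₀, h₁⟩ := PMF.exists_ne_inv_card_le_toReal γ hcard
  have hgap := fDiv_bind_add_mul_midpointGap_le (μ₁ := μ₁) hf.convexOn hμ₂ γ hne
    (by positivity) (mul_le_mul (hδq i₀) h₀ hW.le ENNReal.toReal_nonneg)
    (mul_le_mul (hδq i₁) h₁ hW.le ENNReal.toReal_nonneg)
  have hDle := mul_le_mul_of_nonneg_left (hDgap ⟨(i₀, i₁), hne⟩)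
    (by positivity : 0 ≤ δ * (Fintype.card W : ℝ)⁻¹)
  linarith

theorem iSup_fDiv_bind_lt [Nonempty W] (hf : StrictConvexOn ℝ (Ici 0) f)
    (hμ₂ : ∀ x, μ₂ x ≠ 0)
    (hratio : ∀ i j, i ≠ j → (μ₁ i).toReal / (μ₂ i).toReal ≠ (μ₁ j).toReal / (μ₂ j).toReal)
    (hcard : Fintype.card W < Fintype.card X) :
    (⨆ γ : X → PMF W, fDiv f W (μ₁.bind γ) (μ₂.bind γ)) < fDiv f X μ₁ μ₂ := by
  obtain ⟨ε, hε, hγ⟩ := exists_pos_forall_fDiv_bind_add_le hf hμ₂ hratio hcard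
  exact (ciSup_le fun γ => le_sub_iff_add_le.2 (hγ γ)).trans_lt (sub_lt_self _ hε)

end Cut

theorem PMF.exists_injective (n : ℕ) : ∃ μ : PMF (Fin (n + 1)), Function.Injective μ := by
  set g : Fin (n + 1) → ℝ≥0∞ := fun i => ((i + 1 : ℕ) : ℝ≥0∞)
  have hg0 : ∑' i, g i ≠ 0 := ENNReal.tsum_eq_zero.not.2 fun h => by simpa [g] using h 0
  have hgtop : ∑' i, g i ≠ ∞ := by simp [g, tsum_fintype]
  refine ⟨PMF.normalize g hg0 hgtop, fun i j h => ?_⟩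
  rw [PMF.normalize_apply, PMF.normalize_apply,
    ENNReal.mul_left_inj (ENNReal.inv_ne_zero.2 hgtop) (ENNReal.inv_ne_top.2 hg0)] at h
  exact Fin.ext (by simpa [g] using h)

theorem PMF.injective_toReal_div_uniformOfFintype {X : Type} [Fintype X] [Nonempty X]
    {μ : PMF X} (hμ : Function.Injective μ) :
    Function.Injective fun x => (μ x).toReal / (PMF.uniformOfFintype X x).toReal := by
  intro x y h
  have hunif : ((Fintype.card X : ℝ≥0∞)⁻¹).toReal ≠ 0 := by simp
  simp only [PMF.uniformOfFintype_apply, div_left_inj' hunif] at h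
  exact hμ ((ENNReal.toReal_eq_toReal_iff' (μ.apply_ne_top x) (μ.apply_ne_top y)).1 h)

theorem fDiv_not_kGenerated_general (f : ℝ → ℝ)
    (hconv : StrictConvexOn ℝ (Set.Ici (0:ℝ)) f)
    (k : ℕ) (hk : 1 ≤ k) :
    (∃ (X : Type) (μ₁ μ₂ : PMF X),
      (⨆ γ : X → PMF (Fin k), fDiv f (Fin k) (μ₁.bind γ) (μ₂.bind γ)) <
        fDiv f X μ₁ μ₂) ∧
    (∀ μ₁ μ₂ : PMF (Fin (k + 1)),
      (∀ i, μ₁ i ≠ 0) → (∀ i, μ₂ i ≠ 0) →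
      (∀ i j, i ≠ j →
        (μ₁ i).toReal / (μ₂ i).toReal ≠ (μ₁ j).toReal / (μ₂ j).toReal) →
      (⨆ γ : Fin (k + 1) → PMF (Fin k), fDiv f (Fin k) (μ₁.bind γ) (μ₂.bind γ)) <
        fDiv f (Fin (k + 1)) μ₁ μ₂) := by
  have : NeZero k := ⟨by omega⟩
  have hcard : Fintype.card (Fin k) < Fintype.card (Fin (k + 1)) := by simp
  obtain ⟨μ, hμ⟩ := PMF.exists_injective k
  have hratio := PMF.injective_toReal_div_uniformOfFintype hμ
  exact ⟨⟨Fin (k + 1), μ, PMF.uniformOfFintype _,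
      iSup_fDiv_bind_lt hconv (by simp) (fun _ _ hij => hratio.ne hij) hcard⟩,
    fun _ _ _ hμ₂ hratio => iSup_fDiv_bind_lt hconv hμ₂ hratio hcard⟩

/-- If the weight function `f` is strictly convex (and satisfies the usual boundary
condition `lim_{t→0+} t·f(0/t) = 0`), the associated `f`-divergence is not `k`-generated
for any finite `k ≥ 1`: its `k`-cut is strictly smaller somewhere.  In particular this
happens on `X = {0,1,…,k}` for any two full-support distributions with pairwise distinct
likelihood ratios. -/
theorem fDiv_not_kGenerated (f : ℝ → ℝ)
    (hconv : StrictConvexOn ℝ (Set.Ici (0:ℝ)) f)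
    (hlim : Filter.Tendsto (fun t : ℝ => t * f (0 / t))
      (nhdsWithin 0 (Set.Ioi (0:ℝ))) (nhds 0))
    (k : ℕ) (hk : 1 ≤ k) :
    (∃ (X : Type) (μ₁ μ₂ : PMF X),
      (⨆ γ : X → PMF (Fin k), fDiv f (Fin k) (μ₁.bind γ) (μ₂.bind γ)) <
        fDiv f X μ₁ μ₂) ∧
    (∀ μ₁ μ₂ : PMF (Fin (k + 1)),
      (∀ i, μ₁ i ≠ 0) → (∀ i, μ₂ i ≠ 0) →
      (∀ i j, i ≠ j →
        (μ₁ i).toReal / (μ₂ i).toReal ≠ (μ₁ j).toReal / (μ₂ j).toReal) →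
      (⨆ γ : Fin (k + 1) → PMF (Fin k), fDiv f (Fin k) (μ₁.bind γ) (μ₂.bind γ)) <
        fDiv f (Fin (k + 1)) μ₁ μ₂) :=
  fDiv_not_kGenerated_general f hconv k hk
end

section
/- Let k ≥ 1 and let F : [0,1]^{2k} → [0,∞] be a quasi-convex function. Define the divergence Δ^F by Δ^F_X(μ₁‖μ₂) = sup over partitions {A₁,…,A_k} of X into k parts of F(μ₁(A₁),…,μ₁(A_k), μ₂(A₁),…,μ₂(A_k)). Then Δ^F is quasi-convex and k-generated: for every type X and all μ₁, μ₂ ∈ PMF(X), Δ^F_X(μ₁‖μ₂) equals the supremum over probabilistic maps γ : X → PMF({1,…,k}) of Δ^F_{{1,…,k}}(γ(μ₁)‖γ(μ₂)). -/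
/-!
Pushing forward along a partition commutes with mixtures, so quasi-convexity of `Δ^F` is
inherited from that of `F` one partition at a time.

For `k`-generation, a probabilistic map `γ : X → PMF (Fin k)` followed by a partition of
`Fin k` is a randomized partition of `X`. Its pair of pushforwards is a limit of finite mixtures
of pairs coming from deterministic partitions, and it lies in their convex hull because the set of
these pairs is compact and, by Carathéodory, so is its convex hull in `ℝ^{2k}`. Quasi-convexity
of `F` along that finite mixture bounds its value by `Δ^F`. Conversely, every partition `P` is the
probabilistic map `x ↦ pure (P x)` followed by the identity partition.
-/

open scoped ENNReal

/-- The divergence associated with a function `F` on pairs of probability vectors: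
the supremum of `F` over probabilities of `k`-partitions (a `k`-partition of `X` is
encoded by a function `P : X → Fin k`, with parts `A_i = P⁻¹ {i}`). -/
noncomputable def DeltaF (k : ℕ)
    (F : (Fin k → ℝ≥0∞) × (Fin k → ℝ≥0∞) → ℝ≥0∞)
    (X : Type) (μ₁ μ₂ : PMF X) : ℝ≥0∞ :=
  ⨆ P : X → Fin k,
    F (fun i => μ₁.toOuterMeasure (P ⁻¹' {i}),
       fun i => μ₂.toOuterMeasure (P ⁻¹' {i}))

open Set Filter Topology

theorem IsCompact.convexHull {E : Type*} [AddCommGroup E] [Module ℝ E] [FiniteDimensional ℝ E]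
    [TopologicalSpace E] [ContinuousAdd E] [ContinuousSMul ℝ E] {s : Set E} (hs : IsCompact s) :
    IsCompact (_root_.convexHull ℝ s) := by
  -- Carathéodory: convex combinations of at most `finrank ℝ E + 1` points suffice.
  have hcover : _root_.convexHull ℝ s = ⋃ n ∈ Finset.range (Module.finrank ℝ E + 2),
      (fun p : (Fin n → ℝ) × (Fin n → E) => ∑ i, p.1 i • p.2 i) ''
        (stdSimplex ℝ (Fin n) ×ˢ univ.pi fun _ => s) := by
    refine Subset.antisymm (fun x hx => ?_) (iUnion₂_subset fun n _ => ?_)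
    · obtain ⟨ι, _, z, w, hzs, hz, hw, hw1, rfl⟩ := eq_pos_convex_span_of_mem_convexHull hx
      have hcard : Fintype.card ι < Module.finrank ℝ E + 2 :=
        Nat.lt_succ_of_le (hz.card_le_finrank_succ.trans (by simpa using Submodule.finrank_le _))
      let e := Fintype.equivFin ι
      refine mem_iUnion₂.2 ⟨_, Finset.mem_range.2 hcard, (w ∘ e.symm, z ∘ e.symm),
        ⟨⟨fun i => (hw _).le, ?_⟩, fun i _ => hzs ⟨_, rfl⟩⟩, e.symm.sum_comp fun i => w i • z i⟩
      rw [← hw1]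
      exact e.symm.sum_comp w
    · rintro _ ⟨⟨w, z⟩, ⟨hw, hz⟩, rfl⟩
      exact (convex_convexHull ℝ s).sum_mem (fun i _ => hw.1 i) hw.2
        fun i _ => subset_convexHull ℝ s (hz i trivial)
  rw [hcover]
  exact (Finset.range _).isCompact_biUnion fun n _ =>
    ((isCompact_stdSimplex _ _).prod (isCompact_univ_pi fun _ => hs)).image (by fun_prop)

namespace PMF

variable {X α : Type*}

theorem sum_coe_eq_one_s19 [Fintype X] (p : PMF X) : ∑ x, p x = 1 := by
  rw [← tsum_fintype (L := .unconditional _), p.tsum_coe]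

theorem toReal_bind_apply_s19 (μ : PMF X) (γ : X → PMF α) (a : α) :
    ((μ.bind γ) a).toReal = ∑' x, (μ x).toReal * (γ x a).toReal := by
  rw [bind_apply, ENNReal.tsum_toReal_eq fun x => ENNReal.mul_ne_top (μ.apply_ne_top x)
    ((γ x).apply_ne_top a)]
  simp only [ENNReal.toReal_mul]

theorem bind_eq_bind_update_pure [DecidableEq X] (μ : PMF X) (γ : X → PMF α) (x₀ : X) :
    μ.bind γ = (γ x₀).bind fun a => μ.bind (Function.update γ x₀ (pure a)) := by
  have hγ : γ = fun x => (γ x₀).bind fun a => Function.update γ x₀ (pure a) x := by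
    funext x
    rcases eq_or_ne x x₀ with rfl | hx
    · simp [bind_pure]
    · simp [hx, bind_const]
  conv_lhs => rw [hγ]
  exact bind_comm μ (γ x₀) _

end PMF

noncomputable def probPair {α : Type*} (p q : PMF α) : (α → ℝ) × (α → ℝ) :=
  (fun a => (p a).toReal, fun a => (q a).toReal)

section probPair

variable {X α : Type*}

theorem tendsto_toReal_bind_apply {ι : Type*} {l : Filter ι} (μ : PMF X) {γ : ι → X → PMF α}
    {γ₀ : X → PMF α} (hγ : ∀ x, ∀ᶠ n in l, γ n x = γ₀ x) (a : α) :
    Tendsto (fun n => ((μ.bind (γ n)) a).toReal) l (𝓝 ((μ.bind γ₀) a).toReal) := by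
  simp only [PMF.toReal_bind_apply_s19]
  refine tendsto_tsum_of_dominated_convergence (bound := fun x => (μ x).toReal)
    (ENNReal.summable_toReal (by simp)) (fun x => ?_) (Eventually.of_forall fun n x => ?_)
  · exact tendsto_const_nhds.congr' ((hγ x).mono fun n hn => by simp only [hn])
  · rw [Real.norm_eq_abs, abs_of_nonneg (by positivity)]
    exact mul_le_of_le_one_right ENNReal.toReal_nonneg
      (ENNReal.toReal_le_of_le_ofReal zero_le_one (by simpa using PMF.coe_le_one _ a))

theorem tendsto_probPair_bind {ι : Type*} {l : Filter ι} (μ₁ μ₂ : PMF X) {γ : ι → X → PMF α}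
    {γ₀ : X → PMF α} (hγ : ∀ x, ∀ᶠ n in l, γ n x = γ₀ x) :
    Tendsto (fun n => probPair (μ₁.bind (γ n)) (μ₂.bind (γ n))) l
      (𝓝 (probPair (μ₁.bind γ₀) (μ₂.bind γ₀))) :=
  (tendsto_pi_nhds.2 (tendsto_toReal_bind_apply μ₁ hγ)).prodMk_nhds
    (tendsto_pi_nhds.2 (tendsto_toReal_bind_apply μ₂ hγ))

theorem continuous_probPair_map [TopologicalSpace α] [DiscreteTopology α] (μ₁ μ₂ : PMF X) :
    Continuous fun P : X → α => probPair (μ₁.map P) (μ₂.map P) := by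
  refine continuous_iff_continuousAt.2 fun P₀ => ?_
  refine tendsto_probPair_bind (γ := fun P => PMF.pure ∘ P) μ₁ μ₂ fun x => ?_
  have : Tendsto (fun P : X → α => P x) (𝓝 P₀) (pure (P₀ x)) := by
    rw [← nhds_discrete]
    exact (continuous_apply x).continuousAt
  exact (tendsto_pure.1 this).mono fun P hP => by simp [hP]

theorem probPair_bind_mem_convexHull {ι : Type*} [Fintype ι] (w : PMF ι) (ν₁ ν₂ : ι → PMF α) :
    probPair (w.bind ν₁) (w.bind ν₂) ∈
      convexHull ℝ (range fun j => probPair (ν₁ j) (ν₂ j)) := by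
  refine mem_convexHull_of_exists_fintype (fun j => (w j).toReal) _
    (fun _ => ENNReal.toReal_nonneg) ?_ (fun j => ⟨j, rfl⟩) ?_
  · rw [← ENNReal.toReal_sum fun j _ => w.apply_ne_top j, w.sum_coe_eq_one_s19, ENNReal.toReal_one]
  · ext a <;> simp only [probPair, Prod.fst_sum, Prod.snd_sum, Finset.sum_apply, Prod.smul_fst,
      Prod.smul_snd, Pi.smul_apply, smul_eq_mul, PMF.toReal_bind_apply_s19, tsum_fintype]

/-- Induction on `A`: a random row is a mixture over its values
(`PMF.bind_eq_bind_update_pure`). -/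
theorem probPair_bind_mem_convexHull_of_eq_pure [Fintype α] (μ₁ μ₂ : PMF X) (A : Finset X) :
    ∀ γ : X → PMF α, (∀ x ∉ A, ∃ a, γ x = PMF.pure a) →
      probPair (μ₁.bind γ) (μ₂.bind γ) ∈
        convexHull ℝ (range fun P : X → α => probPair (μ₁.map P) (μ₂.map P)) := by
  classical
  induction A using Finset.induction_on with
  | empty =>
    intro γ hγ
    choose P hP using fun x => hγ x (Finset.notMem_empty x)
    obtain rfl : γ = PMF.pure ∘ P := funext hP
    exact subset_convexHull ℝ _ ⟨P, rfl⟩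
  | insert x₀ A _ ih =>
    intro γ hγ
    have hupdate : ∀ a, probPair (μ₁.bind (Function.update γ x₀ (PMF.pure a)))
        (μ₂.bind (Function.update γ x₀ (PMF.pure a))) ∈
          convexHull ℝ (range fun P : X → α => probPair (μ₁.map P) (μ₂.map P)) := by
      refine fun a => ih _ fun x hx => ?_
      rcases eq_or_ne x x₀ with rfl | hx₀
      · exact ⟨a, Function.update_self ..⟩
      · rw [Function.update_of_ne hx₀]
        exact hγ x (by simp [hx₀, hx])
    rw [μ₁.bind_eq_bind_update_pure γ x₀, μ₂.bind_eq_bind_update_pure γ x₀]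
    exact (convex_convexHull ℝ _).convexHull_subset_iff.2 (range_subset_iff.2 hupdate)
      (probPair_bind_mem_convexHull _ _ _)

end probPair

def QuasiconvexOnUnitCube {k : ℕ} (F : (Fin k → ℝ≥0∞) × (Fin k → ℝ≥0∞) → ℝ≥0∞) : Prop :=
  ∀ (N : ℕ) (w : PMF (Fin N)) (v : Fin N → (Fin k → ℝ≥0∞) × (Fin k → ℝ≥0∞)),
    (∀ m i, (v m).1 i ≤ 1 ∧ (v m).2 i ≤ 1) →
    F (fun i => ∑ m, w m * (v m).1 i, fun i => ∑ m, w m * (v m).2 i) ≤ ⨆ m, F (v m)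

namespace QuasiconvexOnUnitCube

variable {k : ℕ} {F : (Fin k → ℝ≥0∞) × (Fin k → ℝ≥0∞) → ℝ≥0∞}

theorem bind_le_iSup (hF : QuasiconvexOnUnitCube F) {ι : Type*} [Fintype ι] (w : PMF ι)
    (ν₁ ν₂ : ι → PMF (Fin k)) :
    F (⇑(w.bind ν₁), ⇑(w.bind ν₂)) ≤ ⨆ j, F (⇑(ν₁ j), ⇑(ν₂ j)) := by
  let e := Fintype.equivFin ι
  let w' : PMF (Fin (Fintype.card ι)) := PMF.ofFintype (fun m => w (e.symm m)) (by
    rw [e.symm.sum_comp w, w.sum_coe_eq_one_s19])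
  have hbind : ∀ ν : ι → PMF (Fin k), ⇑(w.bind ν) = fun i => ∑ m, w' m * ν (e.symm m) i := by
    intro ν
    funext i
    rw [PMF.bind_apply, tsum_fintype, ← e.symm.sum_comp]
    rfl
  rw [hbind, hbind, ← e.symm.iSup_comp]
  exact hF _ w' (fun m => (⇑(ν₁ (e.symm m)), ⇑(ν₂ (e.symm m))))
    fun m i => ⟨PMF.coe_le_one _ i, PMF.coe_le_one _ i⟩

theorem le_iSup_of_probPair_mem_convexHull (hF : QuasiconvexOnUnitCube F) {ι : Type*}
    {ν₁ ν₂ : ι → PMF (Fin k)} {p₁ p₂ : PMF (Fin k)}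
    (h : probPair p₁ p₂ ∈ convexHull ℝ (range fun j => probPair (ν₁ j) (ν₂ j))) :
    F (⇑p₁, ⇑p₂) ≤ ⨆ j, F (⇑(ν₁ j), ⇑(ν₂ j)) := by
  obtain ⟨κ, _, w, z, hw₀, hw₁, hz, hsum⟩ := mem_convexHull_iff_exists_fintype.1 h
  choose idx hidx using hz
  let w' : PMF κ := PMF.ofFintype (fun m => ENNReal.ofReal (w m)) (by
    rw [← ENNReal.ofReal_sum_of_nonneg fun m _ => hw₀ m, hw₁, ENNReal.ofReal_one])
  have heq : ∀ (p : PMF (Fin k)) (ν : κ → PMF (Fin k)),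
      (∀ a, (p a).toReal = ∑ m, w m * (ν m a).toReal) → p = w'.bind ν := by
    refine fun p ν hp => PMF.ext fun a => (ENNReal.toReal_eq_toReal_iff' (p.apply_ne_top a)
      ((w'.bind ν).apply_ne_top a)).1 ?_
    rw [hp, PMF.toReal_bind_apply_s19, tsum_fintype]
    simp [w', ENNReal.toReal_ofReal (hw₀ _)]
  rw [heq p₁ (ν₁ ∘ idx) ?_, heq p₂ (ν₂ ∘ idx) ?_]
  · exact (hF.bind_le_iSup w' _ _).trans
      (iSup_le fun m => le_iSup (fun j => F (⇑(ν₁ j), ⇑(ν₂ j))) (idx m))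
  · intro a
    simpa [probPair, ← hidx, Prod.snd_sum, Finset.sum_apply] using
      congrArg (fun v => v.2 a) hsum.symm
  · intro a
    simpa [probPair, ← hidx, Prod.fst_sum, Finset.sum_apply] using
      congrArg (fun v => v.1 a) hsum.symm

end QuasiconvexOnUnitCube

theorem DeltaF_eq_iSup_map (k : ℕ) (F : (Fin k → ℝ≥0∞) × (Fin k → ℝ≥0∞) → ℝ≥0∞) (X : Type)
    (μ₁ μ₂ : PMF X) : DeltaF k F X μ₁ μ₂ = ⨆ P : X → Fin k, F (⇑(μ₁.map P), ⇑(μ₂.map P)) := by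
  simp only [DeltaF, ← PMF.toOuterMeasure_map_apply, PMF.toOuterMeasure_apply_singleton]

/-- `γ` is the limit of the kernels that agree with it on a finite set and are deterministic
elsewhere; their pairs of pushforwards lie in the convex hull of the pairs of partition
probabilities, which is compact, hence closed. -/
theorem QuasiconvexOnUnitCube.bind_le_DeltaF {k : ℕ}
    {F : (Fin k → ℝ≥0∞) × (Fin k → ℝ≥0∞) → ℝ≥0∞} (hF : QuasiconvexOnUnitCube F) {X : Type}
    (μ₁ μ₂ : PMF X) (γ : X → PMF (Fin k)) :
    F (⇑(μ₁.bind γ), ⇑(μ₂.bind γ)) ≤ DeltaF k F X μ₁ μ₂ := by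
  classical
  obtain ⟨x₀, -⟩ := μ₁.support_nonempty
  obtain ⟨a₀, -⟩ := (γ x₀).support_nonempty
  let γA : Finset X → X → PMF (Fin k) := fun A x => if x ∈ A then γ x else PMF.pure a₀
  have hclosed :=
    (isCompact_range (continuous_probPair_map (α := Fin k) μ₁ μ₂)).convexHull.isClosed
  have hmem : ∀ A, probPair (μ₁.bind (γA A)) (μ₂.bind (γA A)) ∈
      convexHull ℝ (range fun P : X → Fin k => probPair (μ₁.map P) (μ₂.map P)) :=
    fun A => probPair_bind_mem_convexHull_of_eq_pure μ₁ μ₂ A _ fun x hx => ⟨a₀, if_neg hx⟩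
  have htendsto : Tendsto (fun A => probPair (μ₁.bind (γA A)) (μ₂.bind (γA A))) atTop
      (𝓝 (probPair (μ₁.bind γ) (μ₂.bind γ))) :=
    tendsto_probPair_bind μ₁ μ₂ fun x =>
      (eventually_ge_atTop {x}).mono fun A hA => if_pos (hA (Finset.mem_singleton_self x))
  rw [DeltaF_eq_iSup_map]
  exact hF.le_iSup_of_probPair_mem_convexHull
    (hclosed.mem_of_tendsto htendsto (Eventually.of_forall hmem))

theorem DeltaF_quasiConvex_and_kGenerated_general (k : ℕ)
    (F : (Fin k → ℝ≥0∞) × (Fin k → ℝ≥0∞) → ℝ≥0∞)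
    (hF : ∀ (N : ℕ) (w : PMF (Fin N))
        (v : Fin N → (Fin k → ℝ≥0∞) × (Fin k → ℝ≥0∞)),
      (∀ m i, (v m).1 i ≤ 1 ∧ (v m).2 i ≤ 1) →
      F (fun i => ∑ m, w m * (v m).1 i, fun i => ∑ m, w m * (v m).2 i) ≤
        ⨆ m, F (v m)) :
    -- `Δ^F` is quasi-convex:
    (∀ (X : Type) (N : ℕ) (w : PMF (Fin N)) (μ₁ μ₂ : Fin N → PMF X),
      DeltaF k F X (w.bind μ₁) (w.bind μ₂) ≤ ⨆ m, DeltaF k F X (μ₁ m) (μ₂ m)) ∧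
    -- `Δ^F` is `k`-generated:
    (∀ (X : Type) (μ₁ μ₂ : PMF X),
      DeltaF k F X μ₁ μ₂ =
        ⨆ γ : X → PMF (Fin k), DeltaF k F (Fin k) (μ₁.bind γ) (μ₂.bind γ)) := by
  have hF' : QuasiconvexOnUnitCube F := hF
  simp only [DeltaF_eq_iSup_map, PMF.map_bind]
  refine ⟨fun X N w μ₁ μ₂ => iSup_le fun P => ?_, fun X μ₁ μ₂ => le_antisymm ?_ ?_⟩
  · exact (hF'.bind_le_iSup w _ _).trans (iSup_mono fun m => le_iSup_of_le P le_rfl)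
  · refine iSup_le fun P => le_iSup_of_le (PMF.pure ∘ P) (le_iSup_of_le id ?_)
    simp only [Function.comp_apply, PMF.map_id]
    exact le_rfl
  · refine iSup₂_le fun γ Q => ?_
    simpa only [DeltaF_eq_iSup_map] using hF'.bind_le_DeltaF μ₁ μ₂ fun x => (γ x).map Q

/-- Suprema of quasi-convex functions over probabilities of `k`-partitions are
quasi-convex, `k`-generated divergences. -/
theorem DeltaF_quasiConvex_and_kGenerated (k : ℕ) (hk : 1 ≤ k)
    (F : (Fin k → ℝ≥0∞) × (Fin k → ℝ≥0∞) → ℝ≥0∞)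
    (hF : ∀ (N : ℕ) (w : PMF (Fin N))
        (v : Fin N → (Fin k → ℝ≥0∞) × (Fin k → ℝ≥0∞)),
      (∀ m i, (v m).1 i ≤ 1 ∧ (v m).2 i ≤ 1) →
      F (fun i => ∑ m, w m * (v m).1 i, fun i => ∑ m, w m * (v m).2 i) ≤
        ⨆ m, F (v m)) :
    -- `Δ^F` is quasi-convex:
    (∀ (X : Type) (N : ℕ) (w : PMF (Fin N)) (μ₁ μ₂ : Fin N → PMF X),
      DeltaF k F X (w.bind μ₁) (w.bind μ₂) ≤ ⨆ m, DeltaF k F X (μ₁ m) (μ₂ m)) ∧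
    -- `Δ^F` is `k`-generated:
    (∀ (X : Type) (μ₁ μ₂ : PMF X),
      DeltaF k F X μ₁ μ₂ =
        ⨆ γ : X → PMF (Fin k), DeltaF k F (Fin k) (μ₁.bind γ) (μ₂.bind γ)) :=
  DeltaF_quasiConvex_and_kGenerated_general k F hF
end
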